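/- arXiv:2102.05798 — 8 statements merged into one kernel-verified Lean document; each statement's English description precedes it below -/
import Mathlib

section
/- (Remark 2.) Consider a weighted directed graph on N nodes with adjacency matrix 𝒜 = [a_ij], a_ij ≥ 0, a_ii = 0, Laplacian L, and a nonempty root set 𝒞 ⊆ {1,…,N} such that the graph belongs to 𝔾_𝒞^N (every node is reachable by a directed path from some node of 𝒞). Then the expanded Laplacian L̄ = L + diag(ι₁,…,ι_N) is invertible, and every eigenvalue of L̄ has strictly positive real part. -/
open Matrix

noncomputable section

/-! If `L̄ v = μ v` with `Re μ ≤ 0`, then `g = |v|` satisfies `(deg i + ι i) g i ≤ ∑ j, a i j g j`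
at every node. At a node where `g` is maximal this forces every in-neighbour to be maximal as
well, so the maximum propagates backwards along directed paths to a root, where the extra
`ι`-term forces it to vanish. Hence `v = 0`: every eigenvalue has positive real part, and in
particular `0` is not an eigenvalue. -/

namespace DirectedGraph

variable {ι : Type*} [Fintype ι] [DecidableEq ι]

def expandedDegree (a : ι → ι → ℝ) (𝒞 : Finset ι) (i : ι) : ℝ :=
  (∑ k, a i k) + if i ∈ 𝒞 then 1 else 0

variable {a : ι → ι → ℝ} {𝒞 : Finset ι}

lemma expandedDegree_mul_sub_sum (g : ι → ℝ) (i : ι) :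
    expandedDegree a 𝒞 i * g i - ∑ j, a i j * g j
      = (if i ∈ 𝒞 then 1 else 0) * g i + ∑ j, a i j * (g i - g j) := by
  simp only [expandedDegree, add_mul, Finset.sum_mul, mul_sub, Finset.sum_sub_distrib]
  ring

section MaximumPrinciple

variable {g : ι → ℝ}

lemma eq_of_isMax_of_pos_weight (ha : ∀ i j, 0 ≤ a i j)
    (hg : ∀ i, expandedDegree a 𝒞 i * g i ≤ ∑ j, a i j * g j)
    {i j : ι} (hgi : 0 ≤ g i) (hi : ∀ k, g k ≤ g i) (hij : 0 < a i j) : g j = g i := by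
  have hdrop : ∀ k, 0 ≤ a i k * (g i - g k) := fun k => mul_nonneg (ha i k) (sub_nonneg.2 (hi k))
  have hroot : 0 ≤ (if i ∈ 𝒞 then 1 else 0) * g i := by split_ifs <;> simp [hgi]
  have hdefect : ∑ k, a i k * (g i - g k) ≤ 0 := by
    linarith [hg i, expandedDegree_mul_sub_sum (a := a) (𝒞 := 𝒞) g i]
  have hterm := (Finset.sum_eq_zero_iff_of_nonneg fun k _ => hdrop k).1
    (le_antisymm hdefect (Finset.sum_nonneg fun k _ => hdrop k)) j (Finset.mem_univ j)
  linarith [(mul_eq_zero.1 hterm).resolve_left hij.ne']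

lemma nonpos_of_isMax_of_mem (ha : ∀ i j, 0 ≤ a i j)
    (hg : ∀ i, expandedDegree a 𝒞 i * g i ≤ ∑ j, a i j * g j)
    {i : ι} (hi : ∀ k, g k ≤ g i) (hiC : i ∈ 𝒞) : g i ≤ 0 := by
  have hdrop : 0 ≤ ∑ k, a i k * (g i - g k) :=
    Finset.sum_nonneg fun k _ => mul_nonneg (ha i k) (sub_nonneg.2 (hi k))
  have := expandedDegree_mul_sub_sum (a := a) (𝒞 := 𝒞) g i
  simp only [hiC, if_true, one_mul] at this
  linarith [hg i]

lemma eq_of_isMax_of_reflTransGen (ha : ∀ i j, 0 ≤ a i j)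
    (hg : ∀ i, expandedDegree a 𝒞 i * g i ≤ ∑ j, a i j * g j)
    {i r : ι} (hgi : 0 ≤ g i) (hi : ∀ k, g k ≤ g i)
    (hri : Relation.ReflTransGen (fun s t => 0 < a t s) r i) : g r = g i := by
  induction hri using Relation.ReflTransGen.head_induction_on with
  | refl => rfl
  | head hedge _ ih =>
    exact (eq_of_isMax_of_pos_weight ha hg (ih ▸ hgi) (fun k => ih ▸ hi k) hedge).trans ih

theorem eq_zero_of_reachable (ha : ∀ i j, 0 ≤ a i j) (hg0 : 0 ≤ g)
    (hg : ∀ i, expandedDegree a 𝒞 i * g i ≤ ∑ j, a i j * g j)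
    (hreach : ∀ i, ∃ r ∈ 𝒞, Relation.ReflTransGen (fun s t => 0 < a t s) r i) : g = 0 := by
  cases isEmpty_or_nonempty ι
  · exact Subsingleton.elim _ _
  obtain ⟨i, hi⟩ := Finite.exists_max g
  obtain ⟨r, hrC, hri⟩ := hreach i
  have hr : g r = g i := eq_of_isMax_of_reflTransGen ha hg (hg0 i) hi hri
  have hmax : g i ≤ 0 := hr ▸ nonpos_of_isMax_of_mem ha hg (fun k => hr ▸ hi k) hrC
  exact funext fun k => le_antisymm ((hi k).trans hmax) (hg0 k)

end MaximumPrinciple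

def expandedLaplacian (a : ι → ι → ℝ) (𝒞 : Finset ι) : Matrix ι ι ℝ :=
  diagonal (expandedDegree a 𝒞) - of a

lemma of_eq_expandedLaplacian (ha_diag : ∀ i, a i i = 0) :
    Matrix.of (fun i j =>
      if i = j then (∑ k, a i k) + (if i ∈ 𝒞 then (1 : ℝ) else 0) else -(a i j))
        = expandedLaplacian a 𝒞 := by
  ext i j
  by_cases h : i = j
  · subst h; simp [expandedLaplacian, expandedDegree, ha_diag]
  · simp [expandedLaplacian, h]

lemma mul_sub_eq_sum_of_mulVec_eq_smul {μ : ℂ} {v : ι → ℂ}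
    (hv : (expandedLaplacian a 𝒞).map Complex.ofReal *ᵥ v = μ • v) (i : ι) :
    ((expandedDegree a 𝒞 i : ℂ) - μ) * v i = ∑ j, (a i j : ℂ) * v j := by
  have := congrFun hv i
  simp only [mulVec, dotProduct, expandedLaplacian, map_apply, Matrix.sub_apply, diagonal_apply,
    of_apply, Complex.ofReal_sub, apply_ite, Complex.ofReal_zero, sub_mul, ite_mul, zero_mul,
    Finset.sum_sub_distrib, Finset.sum_ite_eq, Finset.mem_univ, if_true, Pi.smul_apply,
    smul_eq_mul] at this
  linear_combination this

lemma expandedDegree_mul_norm_le (ha : ∀ i j, 0 ≤ a i j) {μ : ℂ} (hμ : μ.re ≤ 0) {v : ι → ℂ}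
    (hv : (expandedLaplacian a 𝒞).map Complex.ofReal *ᵥ v = μ • v) (i : ι) :
    expandedDegree a 𝒞 i * ‖v i‖ ≤ ∑ j, a i j * ‖v j‖ := by
  have hdeg : expandedDegree a 𝒞 i ≤ ‖(expandedDegree a 𝒞 i : ℂ) - μ‖ := by
    refine le_trans ?_ (Complex.re_le_norm _)
    simp only [Complex.sub_re, Complex.ofReal_re]
    linarith
  calc expandedDegree a 𝒞 i * ‖v i‖ ≤ ‖(expandedDegree a 𝒞 i : ℂ) - μ‖ * ‖v i‖ := by gcongr
    _ = ‖∑ j, (a i j : ℂ) * v j‖ := by rw [← norm_mul, mul_sub_eq_sum_of_mulVec_eq_smul hv]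
    _ ≤ ∑ j, a i j * ‖v j‖ := by
      refine (norm_sum_le _ _).trans_eq (Finset.sum_congr rfl fun j _ => ?_)
      rw [norm_mul, Complex.norm_real, Real.norm_of_nonneg (ha i j)]

lemma eq_zero_of_mulVec_eq_smul (ha : ∀ i j, 0 ≤ a i j)
    (hreach : ∀ i, ∃ r ∈ 𝒞, Relation.ReflTransGen (fun s t => 0 < a t s) r i)
    {μ : ℂ} (hμ : μ.re ≤ 0) {v : ι → ℂ}
    (hv : (expandedLaplacian a 𝒞).map Complex.ofReal *ᵥ v = μ • v) : v = 0 := by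
  have hnorm : (fun i => ‖v i‖) = 0 := eq_zero_of_reachable ha (fun i => norm_nonneg (v i))
    (expandedDegree_mul_norm_le ha hμ hv) hreach
  exact funext fun i => norm_eq_zero.1 (congrFun hnorm i)

theorem re_pos_of_mem_spectrum_expandedLaplacian (ha : ∀ i j, 0 ≤ a i j)
    (hreach : ∀ i, ∃ r ∈ 𝒞, Relation.ReflTransGen (fun s t => 0 < a t s) r i) {μ : ℂ}
    (hμ : μ ∈ spectrum ℂ ((expandedLaplacian a 𝒞).map Complex.ofReal)) : 0 < μ.re := by
  rw [← Matrix.spectrum_toLin', ← Module.End.hasEigenvalue_iff_mem_spectrum] at hμ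
  obtain ⟨v, hv⟩ := hμ.exists_hasEigenvector
  by_contra! hre
  exact hv.2 (eq_zero_of_mulVec_eq_smul ha hreach hre (by simpa using hv.apply_eq_smul))

theorem isUnit_expandedLaplacian (ha : ∀ i j, 0 ≤ a i j)
    (hreach : ∀ i, ∃ r ∈ 𝒞, Relation.ReflTransGen (fun s t => 0 < a t s) r i) :
    IsUnit (expandedLaplacian a 𝒞) := by
  have hC : IsUnit ((expandedLaplacian a 𝒞).map Complex.ofReal) := by
    by_contra h
    exact (re_pos_of_mem_spectrum_expandedLaplacian ha hreach
      ((spectrum.zero_mem_iff ℂ).2 h)).ne' rfl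
  rw [isUnit_iff_isUnit_det] at hC ⊢
  rwa [← isUnit_map_iff Complex.ofRealHom, RingHom.map_det]

end DirectedGraph

theorem expanded_laplacian_invertible_positive_spectrum_general
    {N : ℕ}
    (a : Fin N → Fin N → ℝ)
    (ha_nonneg : ∀ i j, 0 ≤ a i j) (ha_diag : ∀ i, a i i = 0)
    (𝒞 : Finset (Fin N))
    (hreach : ∀ i : Fin N, ∃ r ∈ 𝒞, Relation.ReflTransGen (fun s t => 0 < a t s) r i) :
    IsUnit (Matrix.of (fun i j : Fin N =>
      (if i = j then (∑ k, a i k) + (if i ∈ 𝒞 then (1 : ℝ) else 0) else -(a i j)))) ∧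
    ∀ μ ∈ spectrum ℂ ((Matrix.of (fun i j : Fin N =>
      (if i = j then (∑ k, a i k) + (if i ∈ 𝒞 then (1 : ℝ) else 0) else -(a i j)))).map
        Complex.ofReal), 0 < μ.re := by
  rw [DirectedGraph.of_eq_expandedLaplacian ha_diag]
  exact ⟨DirectedGraph.isUnit_expandedLaplacian ha_nonneg hreach,
    fun μ => DirectedGraph.re_pos_of_mem_spectrum_expandedLaplacian ha_nonneg hreach⟩

/-- Remark 2: for a weighted directed graph in the class `𝔾_𝒞^N` (every node
reachable by a directed path from some node of the nonempty root set `𝒞`), the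
expanded Laplacian `L̄ = L + diag(ι)` is invertible and all its eigenvalues have
strictly positive real part. -/
theorem expanded_laplacian_invertible_positive_spectrum
    {N : ℕ}
    (a : Fin N → Fin N → ℝ)
    (ha_nonneg : ∀ i j, 0 ≤ a i j) (ha_diag : ∀ i, a i i = 0)
    (𝒞 : Finset (Fin N)) (h𝒞 : 𝒞.Nonempty)
    (hreach : ∀ i : Fin N, ∃ r ∈ 𝒞, Relation.ReflTransGen (fun s t => 0 < a t s) r i) :
    IsUnit (Matrix.of (fun i j : Fin N =>
      (if i = j then (∑ k, a i k) + (if i ∈ 𝒞 then (1 : ℝ) else 0) else -(a i j)))) ∧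
    ∀ μ ∈ spectrum ℂ ((Matrix.of (fun i j : Fin N =>
      (if i = j then (∑ k, a i k) + (if i ∈ 𝒞 then (1 : ℝ) else 0) else -(a i j)))).map
        Complex.ofReal), 0 < μ.re :=
  expanded_laplacian_invertible_positive_spectrum_general a ha_nonneg ha_diag 𝒞 hreach

end
end

section
/- Consider a weighted directed graph on N nodes with adjacency matrix 𝒜 = [a_ij], a_ij ≥ 0, a_ii = 0, Laplacian L, nonempty root set 𝒞 with indicators ι_i, expanded Laplacian L̄ = L + diag(ι), in-degrees d_in(i) = Σ_j a_ij, D_in = diag(d_in(i)), and D̄ = I − (2I + D_in)^{-1} L̄. If the graph belongs to the class 𝔾_𝒞^N (every node is reachable by a directed path from some node of 𝒞), then every eigenvalue of D̄ lies strictly inside the unit circle, i.e. the spectral radius of D̄ is less than 1. -/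
/-!
`D̄ = (2I + D_in)⁻¹ (2I + D_in − L̄)` is entrywise nonnegative, positive on the diagonal and on
every edge of the graph, and its `i`-th row sums to `1 − (ιᵢ + aᵢᵢ) / (2 + d_in(i))`: at most `1`,
and strictly less than `1` at the roots. If `D̄ v = μ v` with `|μ| ≥ 1`, a coordinate of `v` of
maximal modulus forces its row to sum to `1` and the maximal modulus to be attained at each
in-neighbour. Following a path back from that coordinate to a root gives a root whose row sums to
`1`, which is impossible.
-/

open Matrix Filter Topology

noncomputable section

/-- The expanded Laplacian `L̄ = L + diag(ι)` of a weighted directed graph with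
adjacency matrix `a` and root set `𝒞`. -/
def expandedLaplacian {N : ℕ} (a : Fin N → Fin N → ℝ) (𝒞 : Finset (Fin N)) :
    Matrix (Fin N) (Fin N) ℝ :=
  Matrix.of fun i j : Fin N =>
    if i = j then (∑ k, a i k) + (if i ∈ 𝒞 then (1 : ℝ) else 0) else -(a i j)

/-- The matrix `D̄ = I − (2I + D_in)⁻¹ L̄`. -/
def DbarMatrix {N : ℕ} (a : Fin N → Fin N → ℝ) (𝒞 : Finset (Fin N)) :
    Matrix (Fin N) (Fin N) ℝ :=
  1 - ((2 : Matrix (Fin N) (Fin N) ℝ) + Matrix.diagonal (fun i => ∑ j, a i j))⁻¹ *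
    expandedLaplacian a 𝒞

section Substochastic

variable {n : Type*} [Fintype n]

theorem one_le_sum_of_le_sum_mul {w x : n → ℝ} {m : ℝ} (hw : ∀ j, 0 ≤ w j)
    (hx : ∀ j, x j ≤ m) (hm : 0 < m) (h : m ≤ ∑ j, w j * x j) : 1 ≤ ∑ j, w j := by
  have : ∑ j, w j * x j ≤ (∑ j, w j) * m := by
    rw [Finset.sum_mul]
    exact Finset.sum_le_sum fun j _ => mul_le_mul_of_nonneg_left (hx j) (hw j)
  nlinarith

theorem eq_of_pos_of_le_sum_mul {w x : n → ℝ} {m : ℝ} (hw : ∀ j, 0 ≤ w j)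
    (hsum : ∑ j, w j ≤ 1) (hx : ∀ j, x j ≤ m) (hm : 0 ≤ m) (h : m ≤ ∑ j, w j * x j)
    {j : n} (hj : 0 < w j) : x j = m := by
  by_contra hne
  have hlt : ∑ k, w k * x k < (∑ k, w k) * m := by
    rw [Finset.sum_mul]
    exact Finset.sum_lt_sum (fun k _ => mul_le_mul_of_nonneg_left (hx k) (hw k))
      ⟨j, Finset.mem_univ j, mul_lt_mul_of_pos_left ((hx j).lt_of_ne hne) hj⟩
  nlinarith

theorem Matrix.exists_mulVec_eq_smul_of_mem_spectrum [DecidableEq n] {A : Matrix n n ℂ} {μ : ℂ}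
    (h : μ ∈ spectrum ℂ A) : ∃ v ≠ 0, A *ᵥ v = μ • v := by
  rw [← Matrix.spectrum_toLin', ← Module.End.hasEigenvalue_iff_mem_spectrum] at h
  obtain ⟨v, hv⟩ := h.exists_hasEigenvector
  exact ⟨v, hv.2, by simpa using hv.apply_eq_smul⟩

theorem Matrix.norm_le_sum_mul_norm_of_mulVec_eq_smul {B : Matrix n n ℝ} (hB : ∀ i j, 0 ≤ B i j)
    {v : n → ℂ} {μ : ℂ} (hv : B.map Complex.ofReal *ᵥ v = μ • v) (hμ : 1 ≤ ‖μ‖) (i : n) :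
    ‖v i‖ ≤ ∑ j, B i j * ‖v j‖ :=
  calc ‖v i‖ ≤ ‖μ‖ * ‖v i‖ := le_mul_of_one_le_left (norm_nonneg _) hμ
    _ = ‖∑ j, (B i j : ℂ) * v j‖ := by
      rw [← norm_mul, ← smul_eq_mul, ← Pi.smul_apply, ← hv]; rfl
    _ ≤ ∑ j, B i j * ‖v j‖ := by
      refine (norm_sum_le _ _).trans_eq (Finset.sum_congr rfl fun j _ => ?_)
      rw [norm_mul, Complex.norm_real, Real.norm_of_nonneg (hB i j)]

theorem Matrix.norm_lt_one_of_mem_spectrum_of_substochastic [DecidableEq n] {B : Matrix n n ℝ}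
    (hB : ∀ i j, 0 ≤ B i j) (hrow : ∀ i, ∑ j, B i j ≤ 1)
    (hreach : ∀ i, ∃ r, ∑ j, B r j < 1 ∧ Relation.ReflTransGen (fun s t => 0 < B t s) r i) :
    ∀ μ ∈ spectrum ℂ (B.map Complex.ofReal), ‖μ‖ < 1 := by
  intro μ hμ
  by_contra! hμ1
  obtain ⟨v, hv0, hv⟩ := exists_mulVec_eq_smul_of_mem_spectrum hμ
  obtain ⟨k, hk⟩ : ∃ k, v k ≠ 0 := Function.ne_iff.mp hv0
  have : Nonempty n := ⟨k⟩
  obtain ⟨i, hi⟩ := Finite.exists_max fun j => ‖v j‖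
  have hm : 0 < ‖v i‖ := (norm_pos_iff.mpr hk).trans_le (hi k)
  have hle := norm_le_sum_mul_norm_of_mulVec_eq_smul hB hv hμ1
  have hmax : ∀ {r t}, Relation.ReflTransGen (fun s t => 0 < B t s) r t →
      ‖v t‖ = ‖v i‖ → ‖v r‖ = ‖v i‖ := by
    intro r t h
    induction h with
    | refl => exact id
    | tail _ hst ih =>
      exact fun ht => ih (eq_of_pos_of_le_sum_mul (hB _) (hrow _) hi hm.le (ht ▸ hle _) hst)
  obtain ⟨r, hr, hpath⟩ := hreach i
  have := one_le_sum_of_le_sum_mul (hB r) hi hm (hmax hpath rfl ▸ hle r)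
  linarith

end Substochastic

theorem Fintype.sum_ite_eq_sub_add {n M : Type*} [Fintype n] [DecidableEq n] [AddCommGroup M]
    (f : n → M) (i : n) (x : M) :
    ∑ j, (if i = j then x else f j) = x - f i + ∑ j, f j := by
  rw [← Finset.sum_erase_add _ _ (Finset.mem_univ i),
    ← Finset.sum_erase_add _ _ (Finset.mem_univ i),
    Finset.sum_congr rfl fun j hj => if_neg (Finset.ne_of_mem_erase hj).symm, if_pos rfl]
  abel

section DbarMatrix

variable {N : ℕ} {a : Fin N → Fin N → ℝ} {𝒞 : Finset (Fin N)}

theorem two_add_sum_pos (ha : ∀ i j, 0 ≤ a i j) (i : Fin N) : 0 < 2 + ∑ k, a i k :=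
  add_pos_of_pos_of_nonneg two_pos (Finset.sum_nonneg fun k _ => ha i k)

theorem DbarMatrix_apply (ha : ∀ i j, 0 ≤ a i j) (i j : Fin N) :
    DbarMatrix a 𝒞 i j =
      (if i = j then 2 - (if i ∈ 𝒞 then 1 else 0) else a i j) / (2 + ∑ k, a i k) := by
  have hc : ∀ i, 2 + ∑ k, a i k ≠ 0 := fun i => (two_add_sum_pos ha i).ne'
  have hinv : (2 + diagonal fun i => ∑ k, a i k)⁻¹ = diagonal fun i => (2 + ∑ k, a i k)⁻¹ := by
    rw [← diagonal_ofNat, diagonal_add]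
    exact inv_eq_left_inv (by simp [diagonal_mul_diagonal, inv_mul_cancel₀ (hc _)])
  rw [DbarMatrix, hinv, Matrix.sub_apply, diagonal_mul, expandedLaplacian, of_apply, one_apply]
  split_ifs <;> field_simp [hc i] <;> ring

theorem DbarMatrix_nonneg (ha : ∀ i j, 0 ≤ a i j) (i j : Fin N) : 0 ≤ DbarMatrix a 𝒞 i j := by
  rw [DbarMatrix_apply ha]
  refine div_nonneg ?_ (two_add_sum_pos ha i).le
  split_ifs
  exacts [by norm_num, by norm_num, ha i j]

theorem DbarMatrix_pos_of_pos (ha : ∀ i j, 0 ≤ a i j) {s t : Fin N} (h : 0 < a t s) :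
    0 < DbarMatrix a 𝒞 t s := by
  rw [DbarMatrix_apply ha]
  refine div_pos ?_ (two_add_sum_pos ha t)
  split_ifs
  exacts [by norm_num, by norm_num, h]

theorem sum_DbarMatrix (ha : ∀ i j, 0 ≤ a i j) (i : Fin N) :
    ∑ j, DbarMatrix a 𝒞 i j = 1 - ((if i ∈ 𝒞 then 1 else 0) + a i i) / (2 + ∑ k, a i k) := by
  simp_rw [DbarMatrix_apply ha, ← Finset.sum_div, Fintype.sum_ite_eq_sub_add]
  field_simp [(two_add_sum_pos ha i).ne']
  ring

theorem sum_DbarMatrix_le_one (ha : ∀ i j, 0 ≤ a i j) (i : Fin N) :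
    ∑ j, DbarMatrix a 𝒞 i j ≤ 1 := by
  rw [sum_DbarMatrix ha, sub_le_self_iff]
  refine div_nonneg (add_nonneg ?_ (ha i i)) (two_add_sum_pos ha i).le
  split_ifs <;> norm_num

theorem sum_DbarMatrix_lt_one_of_mem (ha : ∀ i j, 0 ≤ a i j) {i : Fin N} (hi : i ∈ 𝒞) :
    ∑ j, DbarMatrix a 𝒞 i j < 1 := by
  rw [sum_DbarMatrix ha, sub_lt_self_iff, if_pos hi]
  exact div_pos (add_pos_of_pos_of_nonneg one_pos (ha i i)) (two_add_sum_pos ha i)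

end DbarMatrix

theorem Dbar_spectral_radius_lt_one_general
    {N : ℕ}
    (a : Fin N → Fin N → ℝ)
    (ha_nonneg : ∀ i j, 0 ≤ a i j)
    (𝒞 : Finset (Fin N))
    (hreach : ∀ i : Fin N, ∃ r ∈ 𝒞, Relation.ReflTransGen (fun s t => 0 < a t s) r i) :
    ∀ μ ∈ spectrum ℂ ((DbarMatrix a 𝒞).map Complex.ofReal), ‖μ‖ < 1 := by
  refine Matrix.norm_lt_one_of_mem_spectrum_of_substochastic (DbarMatrix_nonneg ha_nonneg)
    (sum_DbarMatrix_le_one ha_nonneg) fun i => ?_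
  obtain ⟨r, hr, hpath⟩ := hreach i
  exact ⟨r, sum_DbarMatrix_lt_one_of_mem ha_nonneg hr,
    Relation.ReflTransGen.mono (fun _ _ => DbarMatrix_pos_of_pos ha_nonneg) _ _ hpath⟩

/-- If the graph belongs to the class `𝔾_𝒞^N` (every node reachable by a directed path
from some node of the nonempty root set `𝒞`), then every eigenvalue of
`D̄ = I − (2I + D_in)⁻¹ L̄` lies strictly inside the unit circle. -/
theorem Dbar_spectral_radius_lt_one
    {N : ℕ}
    (a : Fin N → Fin N → ℝ)
    (ha_nonneg : ∀ i j, 0 ≤ a i j) (ha_diag : ∀ i, a i i = 0)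
    (𝒞 : Finset (Fin N)) (h𝒞 : 𝒞.Nonempty)
    (hreach : ∀ i : Fin N, ∃ r ∈ 𝒞, Relation.ReflTransGen (fun s t => 0 < a t s) r i) :
    ∀ μ ∈ spectrum ℂ ((DbarMatrix a 𝒞).map Complex.ofReal), ‖μ‖ < 1 :=
  Dbar_spectral_radius_lt_one_general a ha_nonneg 𝒞 hreach

end
end

section
/- Let D = [d_ij] ∈ ℝ^{N×N} be a matrix with nonnegative entries whose spectral radius is strictly less than 1, let Ā ∈ ℝ^{q×q} be a matrix all of whose eigenvalues lie in the closed unit disc, and let κ_ij ∈ ℤ_{≥0} with κ_ii = 0 be arbitrary delays. Then the networked time-delay system δ_i(k+1) = Σ_{j=1}^{N} d_ij Ā δ_j(k − κ_ij), i = 1, …, N, with δ_i(k) ∈ ℝ^q, is asymptotically stable: every collection of functions δ_i : ℤ → ℝ^q satisfying the recursion for all k ≥ 0 (with arbitrary given values for k ≤ 0) satisfies δ_i(k) → 0 as k → ∞ for every i. -/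
/-!
By Gelfand's formula the spectral hypotheses give `‖Dᵖ‖ ≤ rᵖ` for some `r < 1` and `p ≥ 1`, and,
for any `s > 1`, `‖Āᵖ‖ ≤ sᵖ` for some `p ≥ 1`; take `s` with `r s < 1`. The first bound yields a
positive vector `v` with `D v ≤ r v` (a truncated Neumann series), the second a norm
`‖x‖_W = max_{m < p} s⁻ᵐ ‖Āᵐ x‖` with `‖Ā x‖_W ≤ s ‖x‖_W`. The scalars `y_i(k) = ‖δ_i(k)‖_W` then
satisfy `y_i(k+1) ≤ ∑_j s d_ij y_j(k - κ_ij)`, and induction shows `y_i(k) ≤ M v_i θᵏ`, where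
`θ^(K+1) = r s` and `K` is the largest delay.
-/

open Matrix Filter Topology
open scoped NNReal ENNReal

attribute [local instance] Matrix.linftyOpNormedAddCommGroup Matrix.linftyOpNormedRing
  Matrix.linftyOpNormedAlgebra

theorem spectrum.eventually_nnnorm_pow_lt {A : Type*} [NormedRing A] [NormedAlgebra ℂ A]
    [CompleteSpace A] (a : A) {r : ℝ≥0} (h : spectralRadius ℂ a < r) :
    ∀ᶠ n : ℕ in atTop, ‖a ^ n‖₊ < r ^ n := by
  filter_upwards [(gelfand_formula a).eventually_lt_const h, eventually_gt_atTop 0] with n hn hn0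
  rw [one_div, ENNReal.rpow_inv_lt_iff (by positivity), ENNReal.rpow_natCast] at hn
  exact_mod_cast hn

theorem Matrix.linfty_opNorm_map_ofReal {m n : Type*} [Fintype m] [Fintype n]
    (A : Matrix m n ℝ) : ‖A.map Complex.ofReal‖ = ‖A‖ := by
  simp only [linfty_opNorm_def, map_apply, Complex.nnnorm_real]

theorem Matrix.eventually_norm_pow_lt {n : Type*} [Fintype n] [DecidableEq n]
    (A : Matrix n n ℝ) {r : ℝ≥0} (h : spectralRadius ℂ (A.map Complex.ofReal) < r) :
    ∀ᶠ m : ℕ in atTop, ‖A ^ m‖ < r ^ m := by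
  filter_upwards [spectrum.eventually_nnnorm_pow_lt _ h] with m hm
  have hpow : (A ^ m).map Complex.ofReal = A.map Complex.ofReal ^ m :=
    Matrix.map_pow A Complex.ofRealHom m
  rw [← linfty_opNorm_map_ofReal, hpow, ← coe_nnnorm]
  exact_mod_cast hm

theorem Matrix.exists_pos_mulVec_le_smul {n : Type*} [Fintype n] [DecidableEq n]
    {D : Matrix n n ℝ} (hD : ∀ i j, 0 ≤ D i j) {r : ℝ} (hr : 0 < r) {p : ℕ} (hp : 0 < p)
    (hDp : ‖D ^ p‖ ≤ r ^ p) : ∃ v : n → ℝ, (∀ i, 0 < v i) ∧ D *ᵥ v ≤ r • v := by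
  -- truncated Neumann series `v = ∑_{m<p} r⁻ᵐ Dᵐ 1` of `(1 - D/r)⁻¹ 1`
  set a : ℕ → n → ℝ := fun m => (r ^ m)⁻¹ • (D ^ m *ᵥ 1) with ha
  have ha_nonneg (m : ℕ) (i : n) : 0 ≤ a m i :=
    mul_nonneg (by positivity) (Finset.sum_nonneg fun j _ => by
      simpa using pow_apply_nonneg hD m i j)
  have ha_zero : a 0 = 1 := by simp [ha]
  have ha_le_one (i : n) : a p i ≤ 1 := by
    calc a p i = (r ^ p)⁻¹ * (D ^ p *ᵥ 1) i := rfl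
      _ ≤ (r ^ p)⁻¹ * ‖D ^ p *ᵥ 1‖ := by
        gcongr; exact (le_abs_self _).trans (norm_le_pi_norm (D ^ p *ᵥ 1) i)
      _ ≤ (r ^ p)⁻¹ * (‖D ^ p‖ * ‖(1 : n → ℝ)‖) := by gcongr; exact linfty_opNorm_mulVec _ _
      _ ≤ (r ^ p)⁻¹ * (r ^ p * 1) := by gcongr; exact pi_norm_const_le (1 : ℝ) |>.trans_eq norm_one
      _ = 1 := by field_simp
  have hDa (m : ℕ) : D *ᵥ a m = r • a (m + 1) := by
    simp only [ha, mulVec_smul, mulVec_mulVec, ← pow_succ', smul_smul, pow_succ, mul_inv]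
    rw [mul_left_comm, mul_inv_cancel₀ hr.ne', mul_one]
  have htelescope : ∑ m ∈ Finset.range p, a (m + 1) = ∑ m ∈ Finset.range p, a m + a p - 1 := by
    rw [← Finset.sum_range_succ, Finset.sum_range_succ', ha_zero, add_sub_cancel_right]
  refine ⟨∑ m ∈ Finset.range p, a m, fun i => ?_, fun i => ?_⟩
  · calc (0 : ℝ) < a 0 i := by simp [ha_zero]
      _ ≤ _ := by
        rw [Finset.sum_apply]
        exact Finset.single_le_sum (fun m _ => ha_nonneg m i) (Finset.mem_range.mpr hp)
  · simp only [mulVec_sum, hDa, ← Finset.smul_sum, htelescope, Pi.smul_apply, Pi.sub_apply,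
      Pi.add_apply, Pi.one_apply, smul_eq_mul]
    gcongr
    linarith [ha_le_one i]

theorem Matrix.exists_pos_mulVec_le_smul_of_spectrum_lt_one {n : Type*} [Fintype n]
    [DecidableEq n] [Nonempty n] {D : Matrix n n ℝ} (hD : ∀ i j, 0 ≤ D i j)
    (hspec : ∀ μ ∈ spectrum ℂ (D.map Complex.ofReal), ‖μ‖ < 1) :
    ∃ r : ℝ, 0 < r ∧ r < 1 ∧ ∃ v : n → ℝ, (∀ i, 0 < v i) ∧ D *ᵥ v ≤ r • v := by
  obtain ⟨r, hDr, hr₁⟩ := ENNReal.lt_iff_exists_nnreal_btwn.mp <|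
    spectrum.spectralRadius_lt_of_forall_lt (D.map Complex.ofReal) (r := 1) fun z hz =>
      mod_cast hspec z hz
  have hr₀ : (0 : ℝ) < r := mod_cast ENNReal.coe_pos.mp (pos_of_gt hDr)
  obtain ⟨p, hDp, hp⟩ := ((D.eventually_norm_pow_lt hDr).and (eventually_gt_atTop 0)).exists
  exact ⟨r, hr₀, mod_cast hr₁, exists_pos_mulVec_le_smul hD hr₀ hp hDp.le⟩

theorem Matrix.exists_norm_pow_mulVec_le_of_spectrum_le_one {n : Type*} [Fintype n]
    [DecidableEq n] {A : Matrix n n ℝ} (hspec : ∀ μ ∈ spectrum ℂ (A.map Complex.ofReal), ‖μ‖ ≤ 1)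
    {s : ℝ} (hs : 1 < s) : ∃ p, 0 < p ∧ ∀ x, ‖(A ^ p) *ᵥ x‖ ≤ s ^ p * ‖x‖ := by
  have hAs : spectralRadius ℂ (A.map Complex.ofReal) < s.toNNReal :=
    (iSup₂_le fun z hz => mod_cast hspec z hz : _ ≤ (1 : ℝ≥0∞)).trans_lt
      (by simpa using hs)
  obtain ⟨p, hAp, hp⟩ := ((A.eventually_norm_pow_lt hAs).and (eventually_gt_atTop 0)).exists
  refine ⟨p, hp, fun x => (linfty_opNorm_mulVec _ _).trans ?_⟩
  gcongr
  simpa [(one_pos.trans hs).le] using hAp.le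

section WeightedOrbit

variable {E : Type*} [SeminormedAddCommGroup E] [NormedSpace ℝ E]

noncomputable def LinearMap.weightedOrbit (f : E →ₗ[ℝ] E) (s : ℝ) (p : ℕ) :
    E →ₗ[ℝ] (Fin p → E) :=
  LinearMap.pi fun m => (s ^ (m : ℕ))⁻¹ • f ^ (m : ℕ)

variable {f : E →ₗ[ℝ] E} {s : ℝ} {p : ℕ}

theorem LinearMap.weightedOrbit_apply (x : E) (m : Fin p) :
    f.weightedOrbit s p x m = (s ^ (m : ℕ))⁻¹ • (f ^ (m : ℕ)) x := rfl

theorem LinearMap.norm_le_norm_weightedOrbit (hp : 0 < p) (x : E) :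
    ‖x‖ ≤ ‖f.weightedOrbit s p x‖ := by
  simpa [weightedOrbit_apply] using norm_le_pi_norm (f.weightedOrbit s p x) ⟨0, hp⟩

theorem LinearMap.norm_weightedOrbit_map_le (hs : 0 < s) (hp : 0 < p)
    (hfp : ∀ x, ‖(f ^ p) x‖ ≤ s ^ p * ‖x‖) (x : E) :
    ‖f.weightedOrbit s p (f x)‖ ≤ s * ‖f.weightedOrbit s p x‖ := by
  refine (pi_norm_le_iff_of_nonneg (by positivity)).mpr fun m => ?_
  have hshift : ‖f.weightedOrbit s p (f x) m‖ =
      s * ((s ^ ((m : ℕ) + 1))⁻¹ * ‖(f ^ ((m : ℕ) + 1)) x‖) := by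
    rw [weightedOrbit_apply, norm_smul, ← Module.End.mul_apply, ← pow_succ, norm_inv, norm_pow,
      Real.norm_of_nonneg hs.le, pow_succ s]
    field_simp
  rw [hshift]
  gcongr
  rcases (show (m : ℕ) + 1 ≤ p from m.isLt).lt_or_eq with h | h
  · simpa [weightedOrbit_apply, norm_smul, abs_of_pos hs] using
      norm_le_pi_norm (f.weightedOrbit s p x) ⟨(m : ℕ) + 1, h⟩
  · rw [h]
    calc (s ^ p)⁻¹ * ‖(f ^ p) x‖ ≤ (s ^ p)⁻¹ * (s ^ p * ‖x‖) := by gcongr; exact hfp x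
      _ = ‖x‖ := by field_simp
      _ ≤ _ := norm_le_norm_weightedOrbit hp x

theorem LinearMap.norm_weightedOrbit_sum_smul_map_le {ι : Type*} [Fintype ι] (hs : 0 < s)
    (hp : 0 < p) (hfp : ∀ x, ‖(f ^ p) x‖ ≤ s ^ p * ‖x‖) {c : ι → ℝ} (hc : ∀ j, 0 ≤ c j)
    (x : ι → E) :
    ‖f.weightedOrbit s p (∑ j, c j • f (x j))‖ ≤ ∑ j, s * c j * ‖f.weightedOrbit s p (x j)‖ := by
  rw [map_sum]
  refine (norm_sum_le _ _).trans (Finset.sum_le_sum fun j _ => ?_)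
  calc ‖f.weightedOrbit s p (c j • f (x j))‖ = c j * ‖f.weightedOrbit s p (f (x j))‖ := by
        rw [map_smul, norm_smul, Real.norm_of_nonneg (hc j)]
    _ ≤ c j * (s * ‖f.weightedOrbit s p (x j)‖) := by
        gcongr
        · exact hc j
        · exact norm_weightedOrbit_map_le hs hp hfp (x j)
    _ = s * c j * ‖f.weightedOrbit s p (x j)‖ := by ring

end WeightedOrbit

section DelayComparison

variable {ι : Type*} [Fintype ι] {P : Matrix ι ι ℝ} {κ : ι → ι → ℕ} {y : ι → ℤ → ℝ}

theorem le_mul_zpow_of_delay_le {v : ι → ℝ} {θ M : ℝ} {K : ℕ} (hP : ∀ i j, 0 ≤ P i j)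
    (hv : 0 ≤ v) (hθ₀ : 0 < θ) (hθ₁ : θ ≤ 1) (hM : 0 ≤ M) (hPv : P *ᵥ v ≤ θ ^ (K + 1) • v)
    (hκ : ∀ i j, κ i j ≤ K)
    (hy : ∀ i (k : ℤ), 0 ≤ k → y i (k + 1) ≤ ∑ j, P i j * y j (k - κ i j))
    (hinit : ∀ i (t : ℤ), -K ≤ t → t ≤ 0 → y i t ≤ M * v i) (i : ι) {t : ℤ} (ht : -K ≤ t) :
    y i t ≤ M * v i * θ ^ t := by
  suffices h : ∀ n : ℕ, ∀ i (t : ℤ), -K ≤ t → t ≤ n → y i t ≤ M * v i * θ ^ t from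
    h t.toNat i t ht (Int.self_le_toNat t)
  intro n
  induction n with
  | zero =>
    intro i t ht₁ ht₂
    calc y i t ≤ M * v i := hinit i t ht₁ (mod_cast ht₂)
      _ ≤ M * v i * θ ^ t :=
        le_mul_of_one_le_right (mul_nonneg hM (hv i))
          (one_le_zpow_of_nonpos₀ hθ₀ hθ₁ (mod_cast ht₂))
  | succ n ih =>
    intro i t ht₁ ht₂
    rcases (show t ≤ n ∨ t = n + 1 by push_cast at ht₂; omega) with ht | rfl
    · exact ih i t ht₁ ht
    have hdelay (j : ι) : θ ^ ((n : ℤ) - κ i j) ≤ θ ^ ((n : ℤ) - K) :=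
      zpow_le_zpow_right_of_le_one₀ hθ₀ hθ₁ (by have := hκ i j; omega)
    calc y i (n + 1) ≤ ∑ j, P i j * y j (n - κ i j) := hy i n (Int.natCast_nonneg n)
      _ ≤ ∑ j, P i j * (M * v j * θ ^ ((n : ℤ) - K)) := by
        gcongr with j
        · exact hP i j
        refine (ih j _ (by have := hκ i j; omega) (by omega)).trans ?_
        exact mul_le_mul_of_nonneg_left (hdelay j) (mul_nonneg hM (hv j))
      _ = M * θ ^ ((n : ℤ) - K) * (P *ᵥ v) i := by
        simp only [mulVec, dotProduct, Finset.mul_sum]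
        exact Finset.sum_congr rfl fun j _ => by ring
      _ ≤ M * θ ^ ((n : ℤ) - K) * (θ ^ (K + 1) * v i) := by
        gcongr
        exact hPv i
      _ = M * v i * θ ^ ((n : ℤ) + 1) := by
        rw [← zpow_natCast, mul_assoc, ← mul_assoc (θ ^ _), ← zpow_add₀ hθ₀.ne']
        push_cast
        ring_nf

theorem exists_geometric_bound_of_delay_le {v : ι → ℝ} {ρ : ℝ} (hP : ∀ i j, 0 ≤ P i j)
    (hv : ∀ i, 0 < v i) (hρ₀ : 0 < ρ) (hρ₁ : ρ < 1) (hPv : P *ᵥ v ≤ ρ • v)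
    (hy : ∀ i (k : ℤ), 0 ≤ k → y i (k + 1) ≤ ∑ j, P i j * y j (k - κ i j)) :
    ∃ θ, 0 ≤ θ ∧ θ < 1 ∧ ∀ i, ∃ C, ∀ k : ℕ, y i k ≤ C * θ ^ k := by
  set K := Finset.univ.sup fun ij : ι × ι => κ ij.1 ij.2
  have hκ (i j : ι) : κ i j ≤ K :=
    Finset.le_sup (f := fun ij : ι × ι => κ ij.1 ij.2) (Finset.mem_univ (i, j))
  -- one step of the recursion spans at most `K + 1` time units
  set θ := ρ ^ ((K + 1 : ℕ) : ℝ)⁻¹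
  have hθ₀ : 0 < θ := Real.rpow_pos_of_pos hρ₀ _
  have hθ₁ : θ < 1 := Real.rpow_lt_one hρ₀.le hρ₁ (by positivity)
  have hθK : θ ^ (K + 1) = ρ := Real.rpow_inv_natCast_pow hρ₀.le K.succ_ne_zero
  set M := ∑ i, ∑ t ∈ Finset.Icc (-K : ℤ) 0, |y i t| / v i
  have hM : 0 ≤ M := Finset.sum_nonneg fun i _ => Finset.sum_nonneg fun t _ =>
    div_nonneg (abs_nonneg _) (hv i).le
  have hinit (i : ι) (t : ℤ) (ht₁ : -K ≤ t) (ht₂ : t ≤ 0) : y i t ≤ M * v i := by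
    have hterm : |y i t| / v i ≤ M :=
      (Finset.single_le_sum (f := fun t => |y i t| / v i)
        (fun _ _ => div_nonneg (abs_nonneg _) (hv i).le) (Finset.mem_Icc.mpr ⟨ht₁, ht₂⟩)).trans
      (Finset.single_le_sum (f := fun i => ∑ t ∈ Finset.Icc (-K : ℤ) 0, |y i t| / v i)
        (fun i _ => Finset.sum_nonneg fun t _ => div_nonneg (abs_nonneg _) (hv i).le)
        (Finset.mem_univ i))
    calc y i t ≤ |y i t| / v i * v i := by rw [div_mul_cancel₀ _ (hv i).ne']; exact le_abs_self _
      _ ≤ M * v i := by gcongr; exact (hv i).le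
  refine ⟨θ, hθ₀.le, hθ₁, fun i => ⟨M * v i, fun k => ?_⟩⟩
  simpa using le_mul_zpow_of_delay_le hP (fun i => (hv i).le) hθ₀ hθ₁.le hM (hθK ▸ hPv) hκ hy
    hinit i (t := k) (by omega)

end DelayComparison

theorem networked_delay_system_asymptotically_stable_general
    {N q : ℕ}
    (D : Matrix (Fin N) (Fin N) ℝ)
    (hD_nonneg : ∀ i j, 0 ≤ D i j)
    (hD_spec : ∀ μ ∈ spectrum ℂ (D.map Complex.ofReal), ‖μ‖ < 1)
    (Abar : Matrix (Fin q) (Fin q) ℝ)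
    (hAbar : ∀ μ ∈ spectrum ℂ (Abar.map Complex.ofReal), ‖μ‖ ≤ 1)
    (κ : Fin N → Fin N → ℕ)
    (δ : Fin N → ℤ → Fin q → ℝ)
    (hδ : ∀ i (k : ℤ), 0 ≤ k →
      δ i (k + 1) = ∑ j, D i j • Abar.mulVec (δ j (k - (κ i j : ℤ)))) :
    ∀ i, Tendsto (fun k : ℕ => δ i (k : ℤ)) atTop (𝓝 0) := by
  intro i₀
  have : Nonempty (Fin N) := ⟨i₀⟩
  obtain ⟨r, hr₀, hr₁, v, hv, hDv⟩ :=
    D.exists_pos_mulVec_le_smul_of_spectrum_lt_one hD_nonneg hD_spec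
  obtain ⟨s, hs₁, hsr⟩ := exists_between ((one_lt_inv₀ hr₀).mpr hr₁)
  have hs₀ : 0 < s := one_pos.trans hs₁
  obtain ⟨p, hp, hAp⟩ := Abar.exists_norm_pow_mulVec_le_of_spectrum_le_one hAbar hs₁
  have hAp' (x : Fin q → ℝ) : ‖(toLin' Abar ^ p) x‖ ≤ s ^ p * ‖x‖ := by
    rw [← toLin'_pow, toLin'_apply]
    exact hAp x
  set W := (toLin' Abar).weightedOrbit s p
  have hsD : (s • D) *ᵥ v ≤ (s * r) • v := by
    rw [smul_mulVec, mul_smul]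
    exact smul_le_smul_of_nonneg_left hDv hs₀.le
  have hstep (i : Fin N) (k : ℤ) (hk : 0 ≤ k) :
      ‖W (δ i (k + 1))‖ ≤ ∑ j, (s • D) i j * ‖W (δ j (k - κ i j))‖ := by
    rw [hδ i k hk]
    simpa only [toLin'_apply, Matrix.smul_apply, smul_eq_mul] using
      LinearMap.norm_weightedOrbit_sum_smul_map_le hs₀ hp hAp' (hD_nonneg i)
        fun j => δ j (k - κ i j)
  obtain ⟨θ, hθ₀, hθ₁, hbound⟩ := exists_geometric_bound_of_delay_le (P := s • D)
    (y := fun i k => ‖W (δ i k)‖) (fun i j => mul_nonneg hs₀.le (hD_nonneg i j)) hv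
    (mul_pos hs₀ hr₀) ((lt_inv_mul_iff₀' hr₀).mp (by rwa [mul_one])) hsD hstep
  obtain ⟨C, hC⟩ := hbound i₀
  refine squeeze_zero_norm (fun k => (LinearMap.norm_le_norm_weightedOrbit hp _).trans (hC k)) ?_
  simpa using (tendsto_pow_atTop_nhds_zero_of_lt_one hθ₀ hθ₁).const_mul C

/-- Asymptotic stability of the networked time-delay system
`δ_i(k+1) = ∑_j d_ij Ā δ_j(k − κ_ij)`: if `D = [d_ij]` is nonnegative with spectral
radius strictly less than 1 and all eigenvalues of `Ā` lie in the closed unit disc,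
then for arbitrary delays `κ_ij ∈ ℤ_{≥0}` with `κ_ii = 0`, every solution (defined on ℤ,
satisfying the recursion for all `k ≥ 0`, with arbitrary initial history) tends to 0. -/
theorem networked_delay_system_asymptotically_stable
    {N q : ℕ}
    (D : Matrix (Fin N) (Fin N) ℝ)
    (hD_nonneg : ∀ i j, 0 ≤ D i j)
    (hD_spec : ∀ μ ∈ spectrum ℂ (D.map Complex.ofReal), ‖μ‖ < 1)
    (Abar : Matrix (Fin q) (Fin q) ℝ)
    (hAbar : ∀ μ ∈ spectrum ℂ (Abar.map Complex.ofReal), ‖μ‖ ≤ 1)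
    (κ : Fin N → Fin N → ℕ) (hκ : ∀ i, κ i i = 0)
    (δ : Fin N → ℤ → Fin q → ℝ)
    (hδ : ∀ i (k : ℤ), 0 ≤ k →
      δ i (k + 1) = ∑ j, D i j • Abar.mulVec (δ j (k - (κ i j : ℤ)))) :
    ∀ i, Tendsto (fun k : ℕ => δ i (k : ℤ)) atTop (𝓝 0) :=
  networked_delay_system_asymptotically_stable_general D hD_nonneg hD_spec Abar hAbar κ δ hδ
end

section
/- Let M₁ ∈ ℝ^{q×n} and M₂ ∈ ℝ^{q×m} be such that the matrix [M₁ M₂] ∈ ℝ^{q×(n+m)} has full row rank q and M₁ has full column rank n (so n ≤ q ≤ n + m). Then there exists an injective matrix V ∈ ℝ^{m×(q−n)} such that the square matrix [M₁, M₂V] ∈ ℝ^{q×q} is invertible. In particular, if [[A−I, B],[C, 0]] ∈ ℝ^{(n+p)×(n+m)} has full row rank n+p and [A−I; C] has full column rank n, then there exists an injective V ∈ ℝ^{m×p} such that [[A−I, BV],[C, 0]] is invertible. -/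
/-!
Let `F` be the column space of `M₁`, of dimension `n`. Since `[M₁ M₂]` is onto, `M₂` followed by
the quotient map `ℝ^q → ℝ^q ⧸ F` is onto the `(q - n)`-dimensional space `ℝ^q ⧸ F`. A linear
section of this map, composed with an isomorphism `ℝ^(q-n) ≃ ℝ^q ⧸ F`, gives `V` such that `M₂ V`
is injective with range complementary to `F`. Then `[M₁, M₂ V]` is injective and square, hence
invertible, and `V` is injective because `M₂ V` is. The block statement is the case
`M₁ = [A - 1; C]`, `M₂ = [B; 0]`.
-/

open Matrix Module

namespace Submodule

variable {K X Y R : Type*} [Field K] [AddCommGroup X] [Module K X] [AddCommGroup Y] [Module K Y]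
  [AddCommGroup R] [Module K R]

theorem isCompl_range_of_bijective_mkQ_comp (F : Submodule K X) (h : R →ₗ[K] X)
    (hh : Function.Bijective (F.mkQ ∘ₗ h)) : IsCompl F (LinearMap.range h) := by
  constructor
  · rw [disjoint_def]
    rintro _ hxF ⟨r, rfl⟩
    have hr : r = 0 := hh.1 <| by simpa using (Quotient.mk_eq_zero F).2 hxF
    simp [hr]
  · rw [codisjoint_iff, ← map_mkQ_eq_top, ← LinearMap.range_comp]
    exact LinearMap.range_eq_top.2 hh.2

theorem exists_isCompl_range_comp [FiniteDimensional K X] [FiniteDimensional K R]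
    (F : Submodule K X) (g : Y →ₗ[K] X) (hFg : F ⊔ LinearMap.range g = ⊤)
    (hdim : finrank K F + finrank K R = finrank K X) :
    ∃ v : R →ₗ[K] Y, Function.Injective (g ∘ₗ v) ∧ IsCompl F (LinearMap.range (g ∘ₗ v)) := by
  obtain ⟨s, hs⟩ := (F.mkQ ∘ₗ g).exists_rightInverse_of_surjective <| by
    rwa [LinearMap.range_comp, map_mkQ_eq_top]
  let e : R ≃ₗ[K] X ⧸ F := .ofFinrankEq _ _ <| by
    have := F.finrank_quotient_add_finrank
    omega
  have hlift : F.mkQ ∘ₗ g ∘ₗ s ∘ₗ e.toLinearMap = e := by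
    rw [← LinearMap.comp_assoc, ← LinearMap.comp_assoc, hs, LinearMap.id_comp]
  have hbij : Function.Bijective (F.mkQ ∘ₗ g ∘ₗ s ∘ₗ e.toLinearMap) := by
    rw [hlift]
    exact e.bijective
  exact ⟨s ∘ₗ e.toLinearMap, .of_comp hbij.1, F.isCompl_range_of_bijective_mkQ_comp _ hbij⟩

end Submodule

namespace Matrix

variable {K ι κ μ : Type*} [Field K] [Fintype κ] [Fintype μ]

theorem mulVecLin_fromCols (A : Matrix ι κ K) (B : Matrix ι μ K) :
    (fromCols A B).mulVecLin = A.mulVecLin.coprod B.mulVecLin ∘ₗ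
      (LinearEquiv.sumArrowLequivProdArrow κ μ K K).toLinearMap :=
  LinearMap.ext fun x => fromCols_mulVec A B x

theorem mulVec_injective_of_rank_eq_card_width {A : Matrix ι κ K}
    (h : A.rank = Fintype.card κ) : Function.Injective A.mulVec := by
  have hker : finrank K (LinearMap.ker A.mulVecLin) = 0 := by
    have := A.mulVecLin.finrank_range_add_finrank_ker
    rw [finrank_fintype_fun_eq_card] at this
    change A.rank + _ = _ at this
    omega
  exact LinearMap.ker_eq_bot.1 (Submodule.finrank_eq_zero.1 hker)

theorem range_mulVecLin_eq_top_of_rank_eq_card_height [Fintype ι] {A : Matrix ι κ K}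
    (h : A.rank = Fintype.card ι) : LinearMap.range A.mulVecLin = ⊤ :=
  Submodule.eq_top_of_finrank_eq (h.trans (finrank_fintype_fun_eq_card K).symm)

theorem mulVec_fromCols_injective {A : Matrix ι κ K} {B : Matrix ι μ K}
    (hA : Function.Injective A.mulVec) (hB : Function.Injective B.mulVec)
    (hAB : Disjoint (LinearMap.range A.mulVecLin) (LinearMap.range B.mulVecLin)) :
    Function.Injective (fromCols A B).mulVec := by
  change Function.Injective (fromCols A B).mulVecLin
  rw [mulVecLin_fromCols, LinearMap.coe_comp, LinearEquiv.coe_coe, EquivLike.injective_comp,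
    ← LinearMap.ker_eq_bot, LinearMap.ker_coprod_of_disjoint_range _ _ hAB,
    LinearMap.ker_eq_bot.2 hA, LinearMap.ker_eq_bot.2 hB, Submodule.prod_bot]

theorem exists_mulVec_injective_fromCols_mul [Fintype ι] {ρ : Type*} [Fintype ρ]
    (M₁ : Matrix ι κ K) (M₂ : Matrix ι μ K) (hrow : (fromCols M₁ M₂).rank = Fintype.card ι)
    (hcol : M₁.rank = Fintype.card κ) (hcard : Fintype.card κ + Fintype.card ρ = Fintype.card ι) :
    ∃ V : Matrix μ ρ K,
      Function.Injective V.mulVec ∧ Function.Injective (fromCols M₁ (M₂ * V)).mulVec := by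
  classical
  have hsup : LinearMap.range M₁.mulVecLin ⊔ LinearMap.range M₂.mulVecLin = ⊤ := by
    rw [← LinearMap.range_coprod, ← range_mulVecLin_eq_top_of_rank_eq_card_height hrow,
      mulVecLin_fromCols, LinearMap.range_comp_of_range_eq_top _ (LinearEquiv.range _)]
  have hdim : M₁.rank + finrank K (ρ → K) = finrank K (ι → K) := by
    simpa [hcol] using hcard
  obtain ⟨v, hv, hcompl⟩ := Submodule.exists_isCompl_range_comp _ M₂.mulVecLin hsup hdim
  have hV : (M₂ * LinearMap.toMatrix' v).mulVecLin = M₂.mulVecLin ∘ₗ v :=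
    LinearMap.ext fun x => by simp [LinearMap.toMatrix'_mulVec]
  refine ⟨LinearMap.toMatrix' v, ?_, ?_⟩
  · rw [← hV, mulVecLin_mul, LinearMap.coe_comp] at hv
    exact hv.of_comp
  · rw [← hV] at hv hcompl
    exact mulVec_fromCols_injective (mulVec_injective_of_rank_eq_card_width hcol) hv
      hcompl.disjoint

theorem exists_mul_eq_one_of_mulVec_injective [Fintype ι] [DecidableEq ι] [DecidableEq κ]
    {S : Matrix ι κ K} (hcard : Fintype.card κ = Fintype.card ι)
    (hS : Function.Injective S.mulVec) : ∃ T : Matrix κ ι K, S * T = 1 ∧ T * S = 1 := by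
  have hsurj : Function.Surjective S.mulVecLin :=
    (LinearMap.injective_iff_surjective_of_finrank_eq_finrank (by simpa using hcard)).1 hS
  obtain ⟨T, hST⟩ := mulVec_surjective_iff_exists_right_inverse.1 hsurj
  exact ⟨T, hST, (mul_eq_one_comm_of_equiv (Fintype.equivOfCardEq hcard.symm)).1 hST⟩

end Matrix

/-- If `[M₁ M₂]` has full row rank `q` and `M₁` has full column rank `n`, then there is
an injective `V ∈ ℝ^{m×(q−n)}` such that the square matrix `[M₁, M₂V]` is invertible.
In particular, if `[[A−I, B],[C, 0]]` has full row rank `n+p` and `[A−I; C]` has full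
column rank `n`, then there exists an injective `V ∈ ℝ^{m×p}` such that
`[[A−I, BV],[C, 0]]` is invertible. -/
theorem exists_injective_V_completion
    {q n m : ℕ}
    (M₁ : Matrix (Fin q) (Fin n) ℝ) (M₂ : Matrix (Fin q) (Fin m) ℝ)
    (hrow : (Matrix.fromCols M₁ M₂).rank = q)
    (hcol : M₁.rank = n) :
    (∃ V : Matrix (Fin m) (Fin (q - n)) ℝ, Function.Injective V.mulVec ∧
      ∃ T : Matrix (Fin n ⊕ Fin (q - n)) (Fin q) ℝ,
        Matrix.fromCols M₁ (M₂ * V) * T = 1 ∧ T * Matrix.fromCols M₁ (M₂ * V) = 1) ∧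
    (∀ (n' m' p' : ℕ) (A : Matrix (Fin n') (Fin n') ℝ) (B : Matrix (Fin n') (Fin m') ℝ)
        (C : Matrix (Fin p') (Fin n') ℝ),
      (Matrix.fromBlocks (A - 1) B C (0 : Matrix (Fin p') (Fin m') ℝ)).rank = n' + p' →
      (Matrix.fromRows (A - 1) C).rank = n' →
      ∃ V : Matrix (Fin m') (Fin p') ℝ, Function.Injective V.mulVec ∧
        IsUnit (Matrix.fromBlocks (A - 1) (B * V) C (0 : Matrix (Fin p') (Fin p') ℝ))) := by
  refine ⟨?_, fun n' m' p' A B C hrow' hcol' => ?_⟩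
  · have hcard : n + (q - n) = q :=
      Nat.add_sub_cancel' (by simpa [hcol] using M₁.rank_le_card_height)
    obtain ⟨V, hV, hS⟩ := exists_mulVec_injective_fromCols_mul (ρ := Fin (q - n)) M₁ M₂
      (by simpa using hrow) (by simpa using hcol) (by simpa using hcard)
    exact ⟨V, hV, exists_mul_eq_one_of_mulVec_injective (by simpa using hcard) hS⟩
  · obtain ⟨V, hV, hS⟩ := exists_mulVec_injective_fromCols_mul (ρ := Fin p')
      (fromRows (A - 1) C) (fromRows B (0 : Matrix (Fin p') (Fin m') ℝ))
      (by simpa [fromCols_fromRows_eq_fromBlocks] using hrow') (by simpa using hcol') (by simp)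
    rw [fromRows_mul, Matrix.zero_mul, fromCols_fromRows_eq_fromBlocks] at hS
    exact ⟨V, hV, mulVec_injective_iff_isUnit.1 hS⟩
end

section
/- Let A ∈ ℝ^{n×n}, B ∈ ℝ^{n×m}, C ∈ ℝ^{p×n}, and let V ∈ ℝ^{m×p} be such that the square matrix T = [[A−I, BV],[C, 0]] ∈ ℝ^{(n+p)×(n+p)} is invertible. Let (Π, Γ') ∈ ℝ^{n×p} × ℝ^{p×p} be the unique solution of T [Π; Γ'] = [0; I_p], and set Γ = V Γ' ∈ ℝ^{m×p}. Then (A−I)Π + BΓ = 0, CΠ = I_p, and rank [[A−I, BΓ],[C, 0]] = n + rank Γ. -/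
/-!
The two block rows of `T [Π; Γ'] = [0; I]` are the regulator equations. For the rank,
`[[A−I, BVΓ'],[C, 0]] = T · diag(I, Γ')`, so its rank is `n + rank Γ'` because `T` is invertible.
Finally `T [0; y] = [BVy; 0]`, so injectivity of `T` forces `V` to be injective, and hence
`rank (VΓ') = rank Γ'`.
-/

open Matrix

theorem Submodule.finrank_prod {K M N : Type*} [DivisionRing K] [AddCommGroup M] [Module K M]
    [AddCommGroup N] [Module K N] [FiniteDimensional K M] [FiniteDimensional K N]
    (p : Submodule K M) (q : Submodule K N) :
    Module.finrank K (p.prod q) = Module.finrank K p + Module.finrank K q := by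
  have hinj : Function.Injective (p.subtype.prodMap q.subtype) :=
    Prod.map_injective.2 ⟨p.injective_subtype, q.injective_subtype⟩
  have := LinearMap.finrank_range_of_inj hinj
  rwa [LinearMap.range_prodMap, Submodule.range_subtype, Submodule.range_subtype,
    Module.finrank_prod] at this

namespace Matrix

variable {l m n o : Type*}

theorem mulVecLin_fromBlocks_zero₁₂_zero₂₁ {R : Type*} [CommSemiring R] [Fintype m] [Fintype o]
    (A : Matrix l m R) (D : Matrix n o R) :
    (fromBlocks A 0 0 D).mulVecLin =
      (LinearEquiv.sumArrowLequivProdArrow l n R R).symm.toLinearMap ∘ₗ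
        A.mulVecLin.prodMap D.mulVecLin ∘ₗ
          (LinearEquiv.sumArrowLequivProdArrow m o R R).toLinearMap := by
  ext x (i | i) <;> simp [fromBlocks_mulVec] <;> rfl

theorem rank_fromBlocks_zero₁₂_zero₂₁ {K : Type*} [Field K] [Fintype l] [Fintype m] [Fintype n]
    [Fintype o] (A : Matrix l m K) (D : Matrix n o K) :
    (fromBlocks A 0 0 D).rank = A.rank + D.rank := by
  rw [rank, mulVecLin_fromBlocks_zero₁₂_zero₂₁, LinearMap.range_comp,
    LinearMap.range_comp_of_range_eq_top _ (LinearEquiv.range _), LinearEquiv.finrank_map_eq,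
    LinearMap.range_prodMap, Submodule.finrank_prod, rank, rank]

theorem mulVec_injective_of_fromBlocks_zero₂₂ {R : Type*} [NonUnitalNonAssocSemiring R]
    [Fintype l] [Fintype m] (A : Matrix n l R) (B : Matrix n m R) (C : Matrix o l R)
    (hT : Function.Injective (fromBlocks A B C (0 : Matrix o m R)).mulVec) :
    Function.Injective B.mulVec := by
  intro x y hxy
  have hblock : Sum.elim (0 : l → R) x = Sum.elim (0 : l → R) y :=
    hT (by simp [fromBlocks_mulVec, hxy])
  funext i
  exact congrFun hblock (Sum.inr i)

theorem rank_mul_eq_right_of_mulVec_injective {R : Type*} [CommRing R] [Fintype m] [Fintype n]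
    (A : Matrix l m R) (B : Matrix m n R) (hA : Function.Injective A.mulVec) :
    (A * B).rank = B.rank := by
  rw [rank, rank, mulVecLin_mul, LinearMap.range_comp,
    ← (Submodule.equivMapOfInjective A.mulVecLin hA _).finrank_eq]

end Matrix

/-- If `T = [[A−I, BV],[C, 0]]` is invertible and `(Π, Γ')` is the (unique) solution of
`T [Π; Γ'] = [0; I]`, then with `Γ = VΓ'` the regulator equations `(A−I)Π + BΓ = 0`,
`CΠ = I` hold, together with the rank condition
`rank [[A−I, BΓ],[C, 0]] = n + rank Γ`. -/
theorem regulator_equations_from_invertible_T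
    {n m p : ℕ}
    (A : Matrix (Fin n) (Fin n) ℝ) (B : Matrix (Fin n) (Fin m) ℝ)
    (C : Matrix (Fin p) (Fin n) ℝ) (V : Matrix (Fin m) (Fin p) ℝ)
    (hT : IsUnit (Matrix.fromBlocks (A - 1) (B * V) C (0 : Matrix (Fin p) (Fin p) ℝ)))
    (Pim : Matrix (Fin n) (Fin p) ℝ) (Γ' : Matrix (Fin p) (Fin p) ℝ)
    (hsol : Matrix.fromBlocks (A - 1) (B * V) C (0 : Matrix (Fin p) (Fin p) ℝ) *
        Matrix.fromRows Pim Γ' =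
      Matrix.fromRows (0 : Matrix (Fin n) (Fin p) ℝ) (1 : Matrix (Fin p) (Fin p) ℝ)) :
    (A - 1) * Pim + B * (V * Γ') = 0 ∧
    C * Pim = 1 ∧
    (Matrix.fromBlocks (A - 1) (B * (V * Γ')) C
      (0 : Matrix (Fin p) (Fin p) ℝ)).rank = n + (V * Γ').rank := by
  rw [fromBlocks_mul_fromRows] at hsol
  obtain ⟨hstate, houtput⟩ := fromRows_inj hsol
  refine ⟨by rwa [← Matrix.mul_assoc], by simpa using houtput, ?_⟩
  have hV : Function.Injective V.mulVec := by
    have hBV := mulVec_injective_of_fromBlocks_zero₂₂ _ _ _ (mulVec_injective_iff_isUnit.2 hT)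
    exact Function.Injective.of_comp (f := B.mulVec) (by simpa [Function.comp_def] using hBV)
  have hfactor : fromBlocks (A - 1) (B * (V * Γ')) C (0 : Matrix (Fin p) (Fin p) ℝ) =
      fromBlocks (A - 1) (B * V) C 0 * fromBlocks 1 0 0 Γ' := by
    simp [fromBlocks_multiply, Matrix.mul_assoc]
  rw [hfactor, rank_mul_eq_right_of_isUnit_det _ _ ((isUnit_iff_isUnit_det _).1 hT),
    rank_fromBlocks_zero₁₂_zero₂₁, rank_one, Fintype.card_fin,
    rank_mul_eq_right_of_mulVec_injective _ _ hV]
end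

section
/- Let A ∈ ℝ^{n×n}, B ∈ ℝ^{n×m}, C ∈ ℝ^{p×n}, R ∈ ℝ^{p×q}, and assume the matrix [A−I; C] ∈ ℝ^{(n+p)×n} has full column rank n. Suppose there exist Π₀ ∈ ℝ^{n×q} and Γ₀ ∈ ℝ^{m×q} with (A−I)Π₀ + BΓ₀ = 0 and CΠ₀ = R. Then there exist Π ∈ ℝ^{n×q} and Γ ∈ ℝ^{m×q} satisfying (A−I)Π + BΓ = 0, CΠ = R, and additionally the rank condition rank [[A−I, BΓ],[C, 0]] = n + rank Γ. -/
/-!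
Write `N = A - I`. Because `[N; C]` is injective, the kernel of `M(Γ) = [[N, BΓ], [C, 0]]`
projects isomorphically onto the space `S(Γ)` of directions `u` for which `N x + BΓu = 0` has a
solution with `C x = 0`; hence `rank M(Γ) = n + q - dim S(Γ)`. Since `ker Γ ⊆ S(Γ)` (take `x = 0`),
the rank condition says exactly `S(Γ) = ker Γ`.

If it fails for a solution `(Π, Γ)`, pick `u ∈ S(Γ)` with `Γu ≠ 0`, its `x`, and a row vector `v`
with `v u = 1` vanishing on `ker Γ`. Then `(Π - x vᵀ, Γ(I - u vᵀ))` is again a solution, and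
`ker (Γ(I - u vᵀ))` contains `ker Γ` and `u`, so the rank of `Γ` drops. Descending on `rank Γ`
ends at a solution satisfying the rank condition.
-/

open Matrix Module

namespace Matrix

variable {K : Type*} [Field K] {ι ν μ κ π : Type*} [Fintype ν] [Fintype κ]

theorem rank_add_finrank_ker_mulVecLin (A : Matrix ι ν K) :
    A.rank + finrank K (LinearMap.ker A.mulVecLin) = Fintype.card ν := by
  simpa [rank] using LinearMap.finrank_range_add_finrank_ker A.mulVecLin

theorem ker_mulVecLin_eq_bot_of_rank_eq_card {A : Matrix ι ν K}
    (h : A.rank = Fintype.card ν) : LinearMap.ker A.mulVecLin = ⊥ := by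
  have := A.rank_add_finrank_ker_mulVecLin
  exact Submodule.finrank_eq_zero.mp (by omega)

theorem rank_lt_rank_of_ker_mulVecLin_lt {A A' : Matrix ι ν K}
    (h : LinearMap.ker A.mulVecLin < LinearMap.ker A'.mulVecLin) : A'.rank < A.rank := by
  have := Submodule.finrank_lt_finrank_of_lt h
  have := A.rank_add_finrank_ker_mulVecLin
  have := A'.rank_add_finrank_ker_mulVecLin
  omega

theorem exists_dotProduct_eq_one_of_notMem {W : Submodule K (κ → K)} {u : κ → K} (hu : u ∉ W) :
    ∃ v : κ → K, v ⬝ᵥ u = 1 ∧ ∀ w ∈ W, v ⬝ᵥ w = 0 := by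
  classical
  obtain ⟨f, hfu, hfW⟩ := W.exists_dual_map_eq_bot_of_notMem hu inferInstance
  have hf : ∀ w, (dotProductEquiv K κ).symm f ⬝ᵥ w = f w := fun w =>
    congrArg (fun g : Dual K (κ → K) => g w) ((dotProductEquiv K κ).apply_symm_apply f)
  refine ⟨(f u)⁻¹ • (dotProductEquiv K κ).symm f, by simp [hf, hfu], fun w hw => ?_⟩
  have : f w = 0 := (Submodule.eq_bot_iff _).1 hfW _ (Submodule.mem_map_of_mem hw)
  simp [hf, this]

theorem fromRows_mulVec_eq_zero_iff {N : Matrix ι ν K} {C : Matrix π ν K} {x : ν → K} :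
    fromRows N C *ᵥ x = 0 ↔ N *ᵥ x = 0 ∧ C *ᵥ x = 0 := by
  simp [fromRows_mulVec, funext_iff]

theorem fromBlocks_zero₂₂_mulVec_eq_zero_iff {N : Matrix ι ν K} {D : Matrix ι κ K}
    {C : Matrix π ν K} {z : ν ⊕ κ → K} :
    fromBlocks N D C 0 *ᵥ z = 0 ↔
      N *ᵥ (z ∘ Sum.inl) + D *ᵥ (z ∘ Sum.inr) = 0 ∧ C *ᵥ (z ∘ Sum.inl) = 0 := by
  simp [fromBlocks_mulVec, funext_iff]

section Regulator

variable [Fintype μ]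

def IsRegulatorSolution (N : Matrix ι ν K) (B : Matrix ι μ K) (C : Matrix π ν K)
    (R : Matrix π κ K) (P : Matrix ν κ K) (Γ : Matrix μ κ K) : Prop :=
  N * P + B * Γ = 0 ∧ C * P = R

def compensableDirections (N : Matrix ι ν K) (C : Matrix π ν K) (D : Matrix ι κ K) :
    Submodule K (κ → K) :=
  (LinearMap.ker (fromBlocks N D C 0).mulVecLin).map (LinearMap.funLeft K K Sum.inr)

variable {N : Matrix ι ν K} {B : Matrix ι μ K} {C : Matrix π ν K}

theorem mem_compensableDirections {D : Matrix ι κ K} {u : κ → K} :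
    u ∈ compensableDirections N C D ↔ ∃ x, N *ᵥ x + D *ᵥ u = 0 ∧ C *ᵥ x = 0 := by
  constructor
  · rintro ⟨z, hz, rfl⟩
    exact ⟨z ∘ Sum.inl, fromBlocks_zero₂₂_mulVec_eq_zero_iff.1 hz⟩
  · rintro ⟨x, hx⟩
    exact ⟨Sum.elim x u, fromBlocks_zero₂₂_mulVec_eq_zero_iff.2 hx, rfl⟩

theorem rank_fromBlocks_add_finrank_compensableDirections
    (hNC : LinearMap.ker (fromRows N C).mulVecLin = ⊥) (D : Matrix ι κ K) :
    (fromBlocks N D C 0).rank + finrank K (compensableDirections N C D) =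
      Fintype.card ν + Fintype.card κ := by
  have hinj : Function.Injective ((LinearMap.funLeft K K Sum.inr).domRestrict
      (LinearMap.ker (fromBlocks N D C 0).mulVecLin)) := by
    rw [LinearMap.injective_domRestrict_iff, Submodule.disjoint_def]
    intro z hz hz_inr
    obtain ⟨hN, hC⟩ := fromBlocks_zero₂₂_mulVec_eq_zero_iff.1 hz
    have hz_inr : z ∘ Sum.inr = 0 := hz_inr
    rw [hz_inr, mulVec_zero, add_zero] at hN
    have hz_inl : z ∘ Sum.inl = 0 :=
      (ker_mulVecLin_eq_bot_iff.1 hNC) _ (fromRows_mulVec_eq_zero_iff.2 ⟨hN, hC⟩)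
    ext (i | j)
    · exact congrFun hz_inl i
    · exact congrFun hz_inr j
  rw [compensableDirections, ← LinearMap.range_domRestrict, LinearMap.finrank_range_of_inj hinj,
    rank_add_finrank_ker_mulVecLin, Fintype.card_sum]

theorem ker_mulVecLin_le_compensableDirections (Γ : Matrix μ κ K) :
    LinearMap.ker Γ.mulVecLin ≤ compensableDirections N C (B * Γ) := fun u hu =>
  mem_compensableDirections.2 ⟨0, by simp [← mulVec_mulVec, show Γ *ᵥ u = 0 from hu]⟩

theorem rank_fromBlocks_mul_eq_of_compensableDirections_le
    (hNC : LinearMap.ker (fromRows N C).mulVecLin = ⊥) {Γ : Matrix μ κ K}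
    (hΓ : compensableDirections N C (B * Γ) ≤ LinearMap.ker Γ.mulVecLin) :
    (fromBlocks N (B * Γ) C 0).rank = Fintype.card ν + Γ.rank := by
  have hM := rank_fromBlocks_add_finrank_compensableDirections hNC (B * Γ)
  rw [le_antisymm hΓ (ker_mulVecLin_le_compensableDirections Γ)] at hM
  have := Γ.rank_add_finrank_ker_mulVecLin
  omega

theorem IsRegulatorSolution.exists_rank_lt {R : Matrix π κ K} {P : Matrix ν κ K}
    {Γ : Matrix μ κ K} (h : IsRegulatorSolution N B C R P Γ) {u : κ → K}
    (hu : u ∈ compensableDirections N C (B * Γ)) (hΓu : Γ *ᵥ u ≠ 0) :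
    ∃ P' Γ', IsRegulatorSolution N B C R P' Γ' ∧ Γ'.rank < Γ.rank := by
  obtain ⟨x, hx, hCx⟩ := mem_compensableDirections.1 hu
  rw [← mulVec_mulVec] at hx
  obtain ⟨v, hvu, hv⟩ := exists_dotProduct_eq_one_of_notMem (W := LinearMap.ker Γ.mulVecLin) hΓu
  set Γ' := Γ - vecMulVec (Γ *ᵥ u) v
  have hΓ' : ∀ w, Γ' *ᵥ w = Γ *ᵥ w - (v ⬝ᵥ w) • Γ *ᵥ u := fun w => by
    simp [Γ', sub_mulVec, vecMulVec_mulVec]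
  refine ⟨P - vecMulVec x v, Γ', ⟨?_, ?_⟩, rank_lt_rank_of_ker_mulVecLin_lt ?_⟩
  · calc N * (P - vecMulVec x v) + B * Γ'
        = (N * P + B * Γ) - vecMulVec (N *ᵥ x + B *ᵥ (Γ *ᵥ u)) v := by
          simp only [Γ', Matrix.mul_sub, mul_vecMulVec, add_vecMulVec]; abel
      _ = 0 := by rw [h.1, hx, zero_vecMulVec, sub_zero]
  · rw [Matrix.mul_sub, h.2, mul_vecMulVec, hCx, zero_vecMulVec, sub_zero]
  · refine SetLike.lt_iff_le_and_exists.2 ⟨fun w hw => ?_, u, ?_, hΓu⟩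
    · have hw : Γ *ᵥ w = 0 := hw
      show Γ' *ᵥ w = 0
      rw [hΓ', hw, hv w hw, zero_smul, sub_zero]
    · show Γ' *ᵥ u = 0
      rw [hΓ', hvu, one_smul, sub_self]

theorem IsRegulatorSolution.exists_rank_fromBlocks_eq
    (hNC : LinearMap.ker (fromRows N C).mulVecLin = ⊥) {R : Matrix π κ K}
    {P₀ : Matrix ν κ K} {Γ₀ : Matrix μ κ K} (h₀ : IsRegulatorSolution N B C R P₀ Γ₀) :
    ∃ P Γ, IsRegulatorSolution N B C R P Γ ∧
      (fromBlocks N (B * Γ) C 0).rank = Fintype.card ν + Γ.rank := by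
  induction hr : Γ₀.rank using Nat.strong_induction_on generalizing P₀ Γ₀ with
  | _ r ih =>
    by_cases hΓ : compensableDirections N C (B * Γ₀) ≤ LinearMap.ker Γ₀.mulVecLin
    · exact ⟨P₀, Γ₀, h₀, rank_fromBlocks_mul_eq_of_compensableDirections_le hNC hΓ⟩
    · obtain ⟨u, hu, hΓu⟩ := SetLike.not_le_iff_exists.1 hΓ
      obtain ⟨P₁, Γ₁, h₁, hlt⟩ := h₀.exists_rank_lt hu hΓu
      exact ih _ (hr ▸ hlt) h₁ rfl

end Regulator

end Matrix

/-- If `[A−I; C]` has full column rank and the regulator equations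
`(A−I)Π₀ + BΓ₀ = 0`, `CΠ₀ = R` admit some solution, then they admit a solution
`(Π, Γ)` that additionally satisfies the rank condition
`rank [[A−I, BΓ],[C, 0]] = n + rank Γ`. -/
theorem regulator_solution_with_rank_condition
    {n m p q : ℕ}
    (A : Matrix (Fin n) (Fin n) ℝ) (B : Matrix (Fin n) (Fin m) ℝ)
    (C : Matrix (Fin p) (Fin n) ℝ) (R : Matrix (Fin p) (Fin q) ℝ)
    (hcol : (Matrix.fromRows (A - 1) C).rank = n)
    (Pim0 : Matrix (Fin n) (Fin q) ℝ) (Γ0 : Matrix (Fin m) (Fin q) ℝ)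
    (hreg10 : (A - 1) * Pim0 + B * Γ0 = 0)
    (hreg20 : C * Pim0 = R) :
    ∃ (Pim : Matrix (Fin n) (Fin q) ℝ) (Γ : Matrix (Fin m) (Fin q) ℝ),
      (A - 1) * Pim + B * Γ = 0 ∧
      C * Pim = R ∧
      (Matrix.fromBlocks (A - 1) (B * Γ) C
        (0 : Matrix (Fin p) (Fin q) ℝ)).rank = n + Γ.rank := by
  have hNC :=
    ker_mulVecLin_eq_bot_of_rank_eq_card (A := fromRows (A - 1) C) (by simpa using hcol)
  obtain ⟨P, Γ, ⟨h₁, h₂⟩, hrank⟩ :=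
    IsRegulatorSolution.exists_rank_fromBlocks_eq hNC (⟨hreg10, hreg20⟩ :
      IsRegulatorSolution (A - 1) B C R Pim0 Γ0)
  exact ⟨P, Γ, h₁, h₂, by simpa using hrank⟩
end

section
/- Let A ∈ ℝ^{n×n}, B ∈ ℝ^{n×m} with (A,B) stabilizable, let Γ₁ ∈ ℝ^{m×v} and Γ₂ ∈ ℝ^{m×(m−v)} be such that the square matrix [Γ₁ Γ₂] ∈ ℝ^{m×m} is invertible, and define Ā = [[A, BΓ₁],[0, I_v]] ∈ ℝ^{(n+v)×(n+v)} and B̄ = [[BΓ₂, 0],[0, I_v]] ∈ ℝ^{(n+v)×m}. Then the pair (Ā, B̄) is stabilizable, i.e. rank [zI − Ā, B̄] = n + v for every z ∈ ℂ with |z| ≥ 1. -/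
/-!
The Hautus matrix of the compensated pair is `[[zI - A, -BΓ₁, BΓ₂, 0], [0, (z - 1)I, 0, I]]`.
Its identity block reaches every bottom row, so only the top row matters. There, any input `u`
can be written as `Γ₁ s₁ + Γ₂ s₂` because `[Γ₁ Γ₂]` has a right inverse, so the top row reaches
everything that `[zI - A, B]` reaches, which is everything when `|z| ≥ 1` by stabilizability
of `(A, B)`.
-/

open Matrix

namespace Matrix

theorem rank_eq_card_height_iff_surjective {K m n : Type*} [Field K] [Fintype m] [Fintype n]
    (A : Matrix m n K) : A.rank = Fintype.card m ↔ Function.Surjective A.mulVec := by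
  rw [← Module.finrank_fintype_fun_eq_card K, rank, ← Submodule.eq_top_iff_finrank_eq,
    LinearMap.range_eq_top, coe_mulVecLin]

variable {R ι μ ν ρ : Type*} [Ring R]

def hautus [DecidableEq ι] (z : R) (A : Matrix ι ι R) (B : Matrix ι μ R) : Matrix ι (ι ⊕ μ) R :=
  fromCols (z • 1 - A) B

variable [Fintype μ] [DecidableEq ν]

theorem hautus_fromBlocks [DecidableEq ι] (z : R) (A : Matrix ι ι R) (B : Matrix ι μ R)
    (Γ₁ : Matrix μ ν R) (Γ₂ : Matrix μ ρ R) :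
    hautus z (fromBlocks A (B * Γ₁) 0 1) (fromBlocks (B * Γ₂) 0 0 1) =
      fromCols (fromBlocks (z • 1 - A) (-(B * Γ₁)) 0 (z • 1 - 1))
        (fromBlocks (B * Γ₂) 0 0 (1 : Matrix ν ν R)) := by
  rw [hautus, ← fromBlocks_one, fromBlocks_smul, sub_eq_add_neg, fromBlocks_neg, fromBlocks_add]
  simp only [smul_zero, zero_add, sub_eq_add_neg, neg_zero]

variable [Fintype ν] [Fintype ρ]

theorem surjective_mulVec_fromCols_fromBlocks {ι' ν' : Type*} [Fintype ι'] [Fintype ν']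
    (P : Matrix ι ι' R) (B : Matrix ι μ R) (Γ₁ : Matrix μ ν' R) (Γ₂ : Matrix μ ρ R)
    (D : Matrix ν ν' R) (hPB : Function.Surjective (fromCols P B).mulVec)
    (hΓ : Function.Surjective (fromCols Γ₁ Γ₂).mulVec) :
    Function.Surjective (fromCols (fromBlocks P (-(B * Γ₁)) 0 D)
      (fromBlocks (B * Γ₂) 0 0 (1 : Matrix ν ν R))).mulVec := by
  intro y
  obtain ⟨xu, hxu⟩ := hPB (y ∘ Sum.inl)
  obtain ⟨s, hs⟩ := hΓ (xu ∘ Sum.inr)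
  rw [← Sum.elim_comp_inl_inr xu, fromCols_mulVec_sumElim] at hxu
  rw [← Sum.elim_comp_inl_inr s, fromCols_mulVec_sumElim] at hs
  have hy₁ : P *ᵥ xu ∘ Sum.inl + (B * Γ₁) *ᵥ s ∘ Sum.inl + (B * Γ₂) *ᵥ s ∘ Sum.inr =
      y ∘ Sum.inl := by
    rw [add_assoc, ← mulVec_mulVec, ← mulVec_mulVec, ← mulVec_add, hs, hxu]
  refine ⟨Sum.elim (Sum.elim (xu ∘ Sum.inl) (-(s ∘ Sum.inl)))
    (Sum.elim (s ∘ Sum.inr) (y ∘ Sum.inr - D *ᵥ (-(s ∘ Sum.inl)))), ?_⟩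
  rw [fromCols_mulVec_sumElim, fromBlocks_mulVec, fromBlocks_mulVec]
  ext (i | i)
  · simpa [← add_assoc, neg_mulVec, mulVec_neg] using congrFun hy₁ i
  · simp

theorem surjective_mulVec_hautus_fromBlocks [Fintype ι] [DecidableEq ι] (z : R)
    (A : Matrix ι ι R) (B : Matrix ι μ R) (Γ₁ : Matrix μ ν R) (Γ₂ : Matrix μ ρ R)
    (hAB : Function.Surjective (hautus z A B).mulVec)
    (hΓ : Function.Surjective (fromCols Γ₁ Γ₂).mulVec) :
    Function.Surjective (hautus z (fromBlocks A (B * Γ₁) 0 1)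
      (fromBlocks (B * Γ₂) 0 0 (1 : Matrix ν ν R))).mulVec := by
  rw [hautus_fromBlocks]
  exact surjective_mulVec_fromCols_fromBlocks _ _ _ _ _ hAB hΓ

end Matrix

theorem compensated_pair_stabilizable_general
    {n m v : ℕ}
    (A : Matrix (Fin n) (Fin n) ℝ) (B : Matrix (Fin n) (Fin m) ℝ)
    (hstab : ∀ z : ℂ, 1 ≤ ‖z‖ →
      (Matrix.fromCols (z • (1 : Matrix (Fin n) (Fin n) ℂ) - A.map Complex.ofReal)
        (B.map Complex.ofReal)).rank = n)
    (Γ₁ : Matrix (Fin m) (Fin v) ℝ) (Γ₂ : Matrix (Fin m) (Fin (m - v)) ℝ)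
    (S : Matrix (Fin v ⊕ Fin (m - v)) (Fin m) ℝ)
    (hS1 : Matrix.fromCols Γ₁ Γ₂ * S = 1) :
    ∀ z : ℂ, 1 ≤ ‖z‖ →
      (Matrix.fromCols
        (z • (1 : Matrix (Fin n ⊕ Fin v) (Fin n ⊕ Fin v) ℂ) -
          (Matrix.fromBlocks A (B * Γ₁) 0 (1 : Matrix (Fin v) (Fin v) ℝ)).map Complex.ofReal)
        ((Matrix.fromBlocks (B * Γ₂) 0 0 (1 : Matrix (Fin v) (Fin v) ℝ)).map
          Complex.ofReal)).rank = n + v := by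
  intro z hz
  have hmap {k l p : Type} [Fintype l] (X : Matrix k l ℝ) (Y : Matrix l p ℝ) :
      (X * Y).map Complex.ofReal = X.map Complex.ofReal * Y.map Complex.ofReal :=
    Matrix.map_mul (f := Complex.ofRealHom)
  have hAB : Function.Surjective (hautus z (A.map Complex.ofReal) (B.map Complex.ofReal)).mulVec :=
    (rank_eq_card_height_iff_surjective _).1 ((hstab z hz).trans (Fintype.card_fin n).symm)
  have hΓ : Function.Surjective
      (fromCols (Γ₁.map Complex.ofReal) (Γ₂.map Complex.ofReal)).mulVec := by
    refine mulVec_surjective_iff_exists_right_inverse.2 ⟨S.map Complex.ofReal, ?_⟩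
    rw [← fromCols_map, ← hmap, hS1, Matrix.map_one _ Complex.ofReal_zero Complex.ofReal_one]
  have hsurj := surjective_mulVec_hautus_fromBlocks z _ _ _ _ hAB hΓ
  refine ((rank_eq_card_height_iff_surjective _).2 ?_).trans (by simp)
  simpa [hautus, fromBlocks_map, hmap] using hsurj

/-- If `(A,B)` is stabilizable and `[Γ₁ Γ₂]` is invertible, then the compensated pair
`(Ā, B̄)` with `Ā = [[A, BΓ₁],[0, I]]` and `B̄ = [[BΓ₂, 0],[0, I]]` is stabilizable
(discrete-time Hautus test). -/
theorem compensated_pair_stabilizable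
    {n m v : ℕ}
    (A : Matrix (Fin n) (Fin n) ℝ) (B : Matrix (Fin n) (Fin m) ℝ)
    (hstab : ∀ z : ℂ, 1 ≤ ‖z‖ →
      (Matrix.fromCols (z • (1 : Matrix (Fin n) (Fin n) ℂ) - A.map Complex.ofReal)
        (B.map Complex.ofReal)).rank = n)
    (Γ₁ : Matrix (Fin m) (Fin v) ℝ) (Γ₂ : Matrix (Fin m) (Fin (m - v)) ℝ)
    (S : Matrix (Fin v ⊕ Fin (m - v)) (Fin m) ℝ)
    (hS1 : Matrix.fromCols Γ₁ Γ₂ * S = 1)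
    (hS2 : S * Matrix.fromCols Γ₁ Γ₂ = 1) :
    ∀ z : ℂ, 1 ≤ ‖z‖ →
      (Matrix.fromCols
        (z • (1 : Matrix (Fin n ⊕ Fin v) (Fin n ⊕ Fin v) ℂ) -
          (Matrix.fromBlocks A (B * Γ₁) 0 (1 : Matrix (Fin v) (Fin v) ℝ)).map Complex.ofReal)
        ((Matrix.fromBlocks (B * Γ₂) 0 0 (1 : Matrix (Fin v) (Fin v) ℝ)).map
          Complex.ofReal)).rank = n + v :=
  compensated_pair_stabilizable_general A B hstab Γ₁ Γ₂ S hS1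
end

section
/- Let A ∈ ℝ^{n×n}, B ∈ ℝ^{n×m}, C ∈ ℝ^{p×n} with (A,C) detectable, let Γ ∈ ℝ^{m×q} with rank Γ = v, let Γ₁ ∈ ℝ^{m×v} be injective with im Γ₁ = im Γ, and assume the rank condition rank [[A−I, BΓ],[C, 0]] = n + rank Γ holds. Define Ā = [[A, BΓ₁],[0, I_v]] ∈ ℝ^{(n+v)×(n+v)} and C̄ = [C, 0] ∈ ℝ^{p×(n+v)}. Then the pair (Ā, C̄) is detectable, i.e. rank [zI − Ā; C̄] = n + v for every z ∈ ℂ with |z| ≥ 1. -/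
/-!
For `z ≠ 1` the block `(z - 1) I_v` of `zI - Ā` forces the second component of a kernel vector of
`[zI - Ā; C̄]` to vanish, and detectability of `(A, C)` kills the first. For `z = 1` the kernel is
that of the real matrix `[[A - I, BΓ₁], [C, 0]]`. Since `im Γ ⊆ im Γ₁` we can write `Γ = Γ₁ T`, which
factors `[[A - I, BΓ], [C, 0]]` through it, so its rank is at least `n + rank Γ = n + v`, its
number of columns.
-/

open Matrix

namespace Matrix

variable {K : Type*} [Field K] {ι κ μ : Type*} [Fintype κ] [Fintype μ]

theorem rank_eq_card_iff_injective_mulVec (M : Matrix ι κ K) :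
    M.rank = Fintype.card κ ↔ Function.Injective M.mulVec := by
  have hsum := M.mulVecLin.finrank_range_add_finrank_ker
  rw [Module.finrank_fintype_fun_eq_card] at hsum
  rw [← coe_mulVecLin, ← LinearMap.ker_eq_bot, ← Submodule.finrank_eq_zero, rank]
  omega

theorem exists_mul_eq_of_range_mulVecLin_le {R : Type*} [CommSemiring R]
    {F : Matrix ι μ R} {G : Matrix ι κ R}
    (h : LinearMap.range G.mulVecLin ≤ LinearMap.range F.mulVecLin) :
    ∃ T : Matrix μ κ R, F * T = G := by
  classical
  choose t ht using fun j : κ => h ⟨Pi.single j 1, rfl⟩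
  refine ⟨(of t)ᵀ, ext fun i j => ?_⟩
  have := congrFun (ht j) i
  rw [mulVecLin_apply, mulVecLin_apply, mulVec_single_one] at this
  simpa [mulVec, mul_apply, dotProduct] using this

theorem injective_mulVec_map_ofReal {M : Matrix ι κ ℝ} (h : Function.Injective M.mulVec) :
    Function.Injective (M.map Complex.ofReal).mulVec := by
  rw [← coe_mulVecLin, injective_iff_map_eq_zero] at h ⊢
  intro u hu
  have hre : M *ᵥ (fun j => (u j).re) = 0 := by
    ext i
    simpa [mulVec, dotProduct, Complex.re_sum] using congrArg Complex.re (congrFun hu i)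
  have him : M *ᵥ (fun j => (u j).im) = 0 := by
    ext i
    simpa [mulVec, dotProduct, Complex.im_sum] using congrArg Complex.im (congrFun hu i)
  funext j
  apply Complex.ext
  exacts [congrFun (h _ hre) j, congrFun (h _ him) j]

variable {n m p q v : Type*} [Fintype n] [Fintype m] [Fintype q] [Fintype v]

theorem injective_mulVec_fromBlocks_of_rank_mul (P : Matrix p n K) (Q : Matrix p m K)
    (R : Matrix ι n K) {Γ : Matrix m q K} {Γ₁ : Matrix m v K}
    (him : LinearMap.range Γ.mulVecLin ≤ LinearMap.range Γ₁.mulVecLin)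
    (hrank : (fromBlocks P (Q * Γ) R 0).rank = Fintype.card n + Fintype.card v) :
    Function.Injective (fromBlocks P (Q * Γ₁) R 0).mulVec := by
  classical
  obtain ⟨T, rfl⟩ := exists_mul_eq_of_range_mulVecLin_le him
  have hfactor : fromBlocks P (Q * (Γ₁ * T)) R 0 =
      fromBlocks P (Q * Γ₁) R 0 * fromBlocks (1 : Matrix n n K) 0 0 T := by
    rw [fromBlocks_multiply]
    simp [Matrix.mul_assoc]
  refine (rank_eq_card_iff_injective_mulVec _).1 (le_antisymm (rank_le_card_width _) ?_)
  rw [Fintype.card_sum, ← hrank, hfactor]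
  exact rank_mul_le_left _ _

variable [DecidableEq n] [DecidableEq v]

def hautusMatrix (z : K) (A : Matrix n n K) (C : Matrix p n K) : Matrix (n ⊕ p) n K :=
  fromRows (z • 1 - A) C

theorem hautusMatrix_fromBlocks_mulVec (z : K) (A : Matrix n n K) (E : Matrix n v K)
    (C : Matrix p n K) (x : n → K) (y : v → K) :
    hautusMatrix z (fromBlocks A E 0 1) (fromCols C 0) *ᵥ Sum.elim x y =
      Sum.elim (Sum.elim ((z • 1 - A) *ᵥ x - E *ᵥ y) ((z - 1) • y)) (C *ᵥ x) := by
  ext ((i | i) | i) <;> simp [hautusMatrix, fromBlocks_mulVec, sub_mulVec, smul_mulVec] <;> ring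

theorem injective_mulVec_hautusMatrix_fromBlocks_of_ne_one {z : K} (hz : z ≠ 1)
    {A : Matrix n n K} (E : Matrix n v K) {C : Matrix p n K}
    (h : Function.Injective (hautusMatrix z A C).mulVec) :
    Function.Injective (hautusMatrix z (fromBlocks A E 0 1) (fromCols C 0)).mulVec := by
  rw [← coe_mulVecLin, injective_iff_map_eq_zero] at h ⊢
  intro u hu
  obtain ⟨x, y, rfl⟩ : ∃ x y, u = Sum.elim x y := ⟨_, _, (Sum.elim_comp_inl_inr u).symm⟩
  rw [mulVecLin_apply, hautusMatrix_fromBlocks_mulVec, ← Sum.elim_zero_zero, ← Sum.elim_zero_zero,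
    Sum.elim_eq_iff, Sum.elim_eq_iff] at hu
  obtain ⟨⟨hx, hy⟩, hC⟩ := hu
  obtain rfl : y = 0 := (smul_eq_zero.1 hy).resolve_left (sub_ne_zero.2 hz)
  rw [mulVec_zero, sub_zero] at hx
  obtain rfl : x = 0 := h x <| by
    rw [mulVecLin_apply, hautusMatrix, fromRows_mulVec, hC, hx, Sum.elim_zero_zero]
  exact Sum.elim_zero_zero

theorem injective_mulVec_hautusMatrix_one_fromBlocks {A : Matrix n n K} {E : Matrix n v K}
    {C : Matrix p n K} (h : Function.Injective (fromBlocks (A - 1) E C 0).mulVec) :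
    Function.Injective (hautusMatrix 1 (fromBlocks A E 0 1) (fromCols C 0)).mulVec := by
  rw [← coe_mulVecLin, injective_iff_map_eq_zero] at h ⊢
  intro u hu
  obtain ⟨x, y, rfl⟩ : ∃ x y, u = Sum.elim x y := ⟨_, _, (Sum.elim_comp_inl_inr u).symm⟩
  rw [mulVecLin_apply, hautusMatrix_fromBlocks_mulVec, ← Sum.elim_zero_zero, ← Sum.elim_zero_zero,
    Sum.elim_eq_iff, Sum.elim_eq_iff] at hu
  obtain ⟨⟨hx, -⟩, hC⟩ := hu
  have hx' : (A - 1) *ᵥ x + E *ᵥ y = 0 := by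
    rw [one_smul, sub_mulVec] at hx
    rw [sub_mulVec, ← neg_eq_zero, ← hx]
    abel
  refine h _ ?_
  rw [mulVecLin_apply, fromBlocks_mulVec, Sum.elim_comp_inl, Sum.elim_comp_inr, hx', hC,
    zero_mulVec, add_zero, Sum.elim_zero_zero]

end Matrix

theorem compensated_pair_detectable_general
    {n m p q v : ℕ}
    (A : Matrix (Fin n) (Fin n) ℝ) (B : Matrix (Fin n) (Fin m) ℝ)
    (C : Matrix (Fin p) (Fin n) ℝ)
    (hdet : ∀ z : ℂ, 1 ≤ ‖z‖ →
      (Matrix.fromRows (z • (1 : Matrix (Fin n) (Fin n) ℂ) - A.map Complex.ofReal)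
        (C.map Complex.ofReal)).rank = n)
    (Γ : Matrix (Fin m) (Fin q) ℝ) (hv : Γ.rank = v)
    (Γ₁ : Matrix (Fin m) (Fin v) ℝ)
    (hΓ₁im : LinearMap.range Γ₁.mulVecLin = LinearMap.range Γ.mulVecLin)
    (hrank : (Matrix.fromBlocks (A - 1) (B * Γ) C
      (0 : Matrix (Fin p) (Fin q) ℝ)).rank = n + Γ.rank) :
    ∀ z : ℂ, 1 ≤ ‖z‖ →
      (Matrix.fromRows
        (z • (1 : Matrix (Fin n ⊕ Fin v) (Fin n ⊕ Fin v) ℂ) -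
          (Matrix.fromBlocks A (B * Γ₁) 0 (1 : Matrix (Fin v) (Fin v) ℝ)).map Complex.ofReal)
        ((Matrix.fromCols C (0 : Matrix (Fin p) (Fin v) ℝ)).map Complex.ofReal)).rank
        = n + v := by
  intro z hz
  rw [show n + v = Fintype.card (Fin n ⊕ Fin v) by simp, rank_eq_card_iff_injective_mulVec,
    fromBlocks_map, fromCols_map]
  simp only [Matrix.map_zero _ Complex.ofReal_zero,
    Matrix.map_one _ Complex.ofReal_zero Complex.ofReal_one]
  change Function.Injective (hautusMatrix z _ _).mulVec
  rcases eq_or_ne z 1 with rfl | hz1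
  · refine injective_mulVec_hautusMatrix_one_fromBlocks ?_
    have hreal := injective_mulVec_fromBlocks_of_rank_mul (A - 1) B C hΓ₁im.ge
      (by simpa [hv] using hrank)
    rw [← Matrix.map_one _ Complex.ofReal_zero Complex.ofReal_one,
      ← Matrix.map_sub _ Complex.ofReal_sub, ← Matrix.map_zero _ Complex.ofReal_zero,
      ← fromBlocks_map]
    exact injective_mulVec_map_ofReal hreal
  · refine injective_mulVec_hautusMatrix_fromBlocks_of_ne_one hz1 _ ?_
    rw [← rank_eq_card_iff_injective_mulVec, Fintype.card_fin]
    exact hdet z hz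

/-- If `(A,C)` is detectable, `Γ₁` is injective with `im Γ₁ = im Γ`, `rank Γ = v`, and the
rank condition `rank [[A−I, BΓ],[C, 0]] = n + rank Γ` holds, then the compensated pair
`(Ā, C̄)` with `Ā = [[A, BΓ₁],[0, I]]` and `C̄ = [C 0]` is detectable
(discrete-time Hautus test). -/
theorem compensated_pair_detectable
    {n m p q v : ℕ}
    (A : Matrix (Fin n) (Fin n) ℝ) (B : Matrix (Fin n) (Fin m) ℝ)
    (C : Matrix (Fin p) (Fin n) ℝ)
    (hdet : ∀ z : ℂ, 1 ≤ ‖z‖ →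
      (Matrix.fromRows (z • (1 : Matrix (Fin n) (Fin n) ℂ) - A.map Complex.ofReal)
        (C.map Complex.ofReal)).rank = n)
    (Γ : Matrix (Fin m) (Fin q) ℝ) (hv : Γ.rank = v)
    (Γ₁ : Matrix (Fin m) (Fin v) ℝ)
    (hΓ₁inj : Function.Injective Γ₁.mulVec)
    (hΓ₁im : LinearMap.range Γ₁.mulVecLin = LinearMap.range Γ.mulVecLin)
    (hrank : (Matrix.fromBlocks (A - 1) (B * Γ) C
      (0 : Matrix (Fin p) (Fin q) ℝ)).rank = n + Γ.rank) :
    ∀ z : ℂ, 1 ≤ ‖z‖ →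
      (Matrix.fromRows
        (z • (1 : Matrix (Fin n ⊕ Fin v) (Fin n ⊕ Fin v) ℂ) -
          (Matrix.fromBlocks A (B * Γ₁) 0 (1 : Matrix (Fin v) (Fin v) ℝ)).map Complex.ofReal)
        ((Matrix.fromCols C (0 : Matrix (Fin p) (Fin v) ℝ)).map Complex.ofReal)).rank
        = n + v :=
  compensated_pair_detectable_general A B C hdet Γ hv Γ₁ hΓ₁im hrank
end
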